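/- arXiv:1310.1182 — 3 statements merged into one kernel-verified Lean document; each statement's English description precedes it below -/
import Mathlib

section
/- Let 1 ≤ p < q ≤ ∞. There exists a constant c(p,q) > 0 such that for every r ∈ (0,1) and every integer n ≥ 2 there exists a nonzero rational function f ∈ R_{n,r} satisfying ‖f‖_{L^q} / ‖f‖_{L^p} ≥ c(p,q) · ( n/(1−r) )^{1/p−1/q}. -/
open MeasureTheory Complex Polynomial ComplexConjugate
open scoped ENNReal Real

noncomputable section

/-- Normalized Lebesgue measure on `(0, 2π]`, parametrizing the unit circle `𝕋`. -/
def mT : MeasureTheory.Measure ℝ :=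
  (ENNReal.ofReal (2 * Real.pi))⁻¹ • (MeasureTheory.volume.restrict (Set.Ioc 0 (2 * Real.pi)))

/-- The point `e^{iθ}` on the unit circle. -/
def eθ (θ : ℝ) : ℂ := Complex.exp (θ * Complex.I)

/-- The `L^p(𝕋, m)` norm of a function on the unit circle. -/
def circLp (f : ℂ → ℂ) (p : ℝ≥0∞) : ℝ≥0∞ :=
  MeasureTheory.eLpNorm (fun θ : ℝ => f (eθ θ)) p mT

set_option maxHeartbeats 1600000

section Aux
open intervalIntegral

def bb (a : ℝ) (w : ℂ) : ℂ := (w - (a:ℂ)) / (1 - (a:ℂ) * w)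
def BB (a : ℝ) (m : ℕ) (w : ℂ) : ℂ := bb a w ^ m
def B1 (a : ℝ) (m : ℕ) (w : ℂ) : ℂ :=
  (m:ℂ) * bb a w ^ (m-1) * ((1 - (a:ℂ)^2) / (1 - (a:ℂ)*w)^2)
def gg (a : ℝ) (m : ℕ) (z : ℂ) : ℂ := (1 - BB a m z) / (1 - z)

variable {a : ℝ} {m : ℕ} {w z : ℂ}

lemma hden (ha0 : 0 < a) (hw : ‖w‖ ≤ 1) : 1 - a ≤ ‖1 - (a:ℂ)*w‖ := by
  have h1 : ‖(1:ℂ)‖ - ‖(a:ℂ)*w‖ ≤ ‖1 - (a:ℂ)*w‖ := norm_sub_norm_le _ _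
  have h2 : ‖(a:ℂ)*w‖ = a * ‖w‖ := by
    rw [norm_mul, Complex.norm_real, Real.norm_eq_abs, abs_of_pos ha0]
  have h3 : a * ‖w‖ ≤ a := by nlinarith
  simp only [norm_one, h2] at h1
  linarith

lemma hden_ne (ha0 : 0 < a) (ha1 : a < 1) (hw : ‖w‖ ≤ 1) : 1 - (a:ℂ)*w ≠ 0 := by
  intro h
  have := hden ha0 hw
  rw [h, norm_zero] at this
  linarith

lemma hb_le (ha0 : 0 < a) (ha1 : a < 1) (hw : ‖w‖ ≤ 1) : ‖bb a w‖ ≤ 1 := by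
  rw [bb, norm_div]
  rw [div_le_one (lt_of_lt_of_le (by linarith) (hden ha0 hw))]
  have hre : w.re^2 + w.im^2 ≤ 1 := by
    have := Complex.sq_norm w
    have h2 : ‖w‖ ≤ 1 := hw
    nlinarith [Complex.normSq_apply w, norm_nonneg w]
  have e1 : ‖w - (a:ℂ)‖^2 = (w.re - a)^2 + w.im^2 := by
    rw [Complex.sq_norm]
    simp [Complex.normSq_apply, Complex.sub_re, Complex.sub_im]
    ring
  have e2 : ‖1 - (a:ℂ)*w‖^2 = (1 - a*w.re)^2 + (a*w.im)^2 := by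
    rw [Complex.sq_norm]
    simp [Complex.normSq_apply, Complex.sub_re, Complex.sub_im, Complex.mul_re, Complex.mul_im]
    ring
  have h1 : ‖w - (a:ℂ)‖^2 ≤ ‖1 - (a:ℂ)*w‖^2 := by
    rw [e1, e2]
    nlinarith [mul_nonneg (by nlinarith : (0:ℝ) ≤ 1-a^2)
      (by linarith : (0:ℝ) ≤ 1 - (w.re^2+w.im^2))]
  nlinarith [norm_nonneg (w - (a:ℂ)), norm_nonneg (1 - (a:ℂ)*w)]

lemma hBB_le (ha0 : 0 < a) (ha1 : a < 1) (hw : ‖w‖ ≤ 1) : ‖BB a m w‖ ≤ 1 := by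
  rw [BB, norm_pow]
  exact pow_le_one₀ (norm_nonneg _) (hb_le ha0 ha1 hw)

lemma geom_aux (u : ℂ) (hu : ‖u‖ ≤ 1) (k : ℕ) : ‖u^k - 1‖ ≤ k * ‖u - 1‖ := by
  induction k with
  | zero => simp
  | succ k ih =>
    have h : u^(k+1) - 1 = u*(u^k - 1) + (u - 1) := by ring
    rw [h]
    calc ‖u*(u^k-1) + (u-1)‖ ≤ ‖u*(u^k-1)‖ + ‖u-1‖ := norm_add_le _ _
      _ ≤ k * ‖u-1‖ + ‖u-1‖ := by
          rw [norm_mul]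
          have : ‖u‖ * ‖u^k - 1‖ ≤ 1 * ‖u^k-1‖ :=
            mul_le_mul_of_nonneg_right hu (norm_nonneg _)
          nlinarith [norm_nonneg (u^k - 1), norm_nonneg (u-1)]
      _ = (k+1 : ℕ) * ‖u-1‖ := by push_cast; ring

lemma hB1_le (ha0 : 0 < a) (ha1 : a < 1) (hm : 1 ≤ m) (hw : ‖w‖ ≤ 1) :
    ‖B1 a m w‖ ≤ 2 * m / (1-a) := by
  have hd := hden ha0 hw
  have h1a : (0:ℝ) < 1 - a := by linarith
  simp only [B1, norm_mul, norm_div, norm_pow]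
  have e1 : ‖(m:ℂ)‖ = (m:ℝ) := by simp
  have e2 : ‖1 - (a:ℂ)^2‖ = 1 - a^2 := by
    rw [show (1 - (a:ℂ)^2) = ((1-a^2 : ℝ):ℂ) by push_cast; ring, Complex.norm_real,
      Real.norm_eq_abs, abs_of_pos (by nlinarith)]
  have e3 : (1-a)^2 ≤ ‖1 - (a:ℂ)*w‖^2 := by nlinarith [norm_nonneg (1 - (a:ℂ)*w)]
  have hb1 : ‖bb a w‖^(m-1) ≤ 1 := pow_le_one₀ (norm_nonneg _) (hb_le ha0 ha1 hw)
  rw [e1, e2]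
  have hb0 : (0:ℝ) ≤ 1 - a^2 := by nlinarith
  have h1a2 : (0:ℝ) < (1-a)^2 := pow_pos h1a 2
  calc (m:ℝ) * ‖bb a w‖^(m-1) * ((1-a^2) / ‖1 - (a:ℂ)*w‖^2)
      ≤ (m:ℝ) * 1 * ((1-a^2)/(1-a)^2) := by
        gcongr <;> first | positivity | assumption | linarith
    _ = (m:ℝ) * ((1+a)/(1-a)) := by field_simp; ring
    _ ≤ (m:ℝ) * (2/(1-a)) := by gcongr; linarith
    _ = 2*m/(1-a) := by ring

lemma one_sub_a_ne (ha1 : a < 1) : (1 : ℂ) - (a:ℂ) ≠ 0 := by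
  intro h
  have : ((1 - a : ℝ) : ℂ) = 0 := by push_cast; linear_combination h
  have := Complex.ofReal_eq_zero.mp this
  linarith

lemma bb_one (ha1 : a < 1) : bb a 1 = 1 := by
  have h := one_sub_a_ne (a := a) ha1
  rw [bb]
  rw [show (1:ℂ) - (a:ℂ)*1 = 1 - (a:ℂ) by ring]
  exact div_self h

lemma BB_one (ha1 : a < 1) : BB a m 1 = 1 := by rw [BB, bb_one ha1, one_pow]

lemma B1_one (ha1 : a < 1) : B1 a m 1 = ((m * (1-a^2) / (1-a)^2 : ℝ) : ℂ) := by
  rw [B1, bb_one ha1, one_pow, mul_one]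
  rw [show (1:ℂ) - (a:ℂ)*1 = ((1 - a : ℝ):ℂ) by push_cast; ring]
  push_cast
  ring

lemma bb_sub_one (ha0 : 0 < a) (ha1 : a < 1) (hw : ‖w‖ ≤ 1) :
    ‖bb a w - 1‖ ≤ 2 * ‖w - 1‖ / (1-a) := by
  have hne := hden_ne ha0 ha1 hw
  have hd := hden ha0 hw
  have h1a : (0:ℝ) < 1 - a := by linarith
  have e : bb a w - 1 = ((1+(a:ℂ)) * (w - 1)) / (1 - (a:ℂ)*w) := by
    rw [bb, div_sub_one hne]; ring
  rw [e, norm_div, norm_mul]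
  have e2 : ‖1 + (a:ℂ)‖ = 1 + a := by
    rw [show (1 + (a:ℂ)) = ((1+a : ℝ):ℂ) by push_cast; ring, Complex.norm_real,
      Real.norm_eq_abs, abs_of_pos (by linarith)]
  rw [e2]
  rw [div_le_div_iff₀ (by linarith) h1a]
  have h2 : (1+a) * ‖w-1‖ ≤ 2 * ‖w-1‖ := by nlinarith [norm_nonneg (w-1)]
  nlinarith [norm_nonneg (w-1), mul_le_mul_of_nonneg_left hd (by nlinarith : (0:ℝ) ≤ (1+a)*‖w-1‖)]

lemma hB1_lip (ha0 : 0 < a) (ha1 : a < 1) (hm : 1 ≤ m) (hw : ‖w‖ ≤ 1)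
    (hw1 : ‖w - 1‖ ≤ 1 - a) :
    ‖B1 a m w - B1 a m 1‖ ≤ 10 * (m/(1-a))^2 * ‖w - 1‖ := by
  have hne := hden_ne ha0 ha1 hw
  have hd := hden ha0 hw
  have h1a : (0:ℝ) < 1 - a := by linarith
  have hne1 : (1:ℂ) - (a:ℂ) ≠ 0 := one_sub_a_ne ha1
  set u := bb a w with hu
  have hule : ‖u‖ ≤ 1 := hb_le ha0 ha1 hw
  -- decomposition
  have hdec : B1 a m w - B1 a m 1 =
      (m:ℂ) * (1 - (a:ℂ)^2) *
        (u^(m-1) * (((1:ℂ)-(a:ℂ))^2 - (1-(a:ℂ)*w)^2) / ((1-(a:ℂ)*w)^2 * ((1:ℂ)-(a:ℂ))^2)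
          + (u^(m-1) - 1) / ((1:ℂ)-(a:ℂ))^2) := by
    rw [B1, B1, bb_one ha1, one_pow, ← hu]
    rw [show (1:ℂ) - (a:ℂ)*1 = (1:ℂ)-(a:ℂ) by ring]
    field_simp
    ring
  rw [hdec]
  have hsq : ((1:ℂ)-(a:ℂ))^2 - (1-(a:ℂ)*w)^2 = ((a:ℂ)*(w-1)) * (((1:ℂ)-(a:ℂ)) + (1-(a:ℂ)*w)) := by
    ring
  -- norms of real scalars
  have na : ‖(a:ℂ)‖ = a := by rw [Complex.norm_real, Real.norm_eq_abs, abs_of_pos ha0]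
  have n1a : ‖(1:ℂ)-(a:ℂ)‖ = 1 - a := by
    rw [show (1:ℂ)-(a:ℂ) = ((1-a:ℝ):ℂ) by push_cast; ring, Complex.norm_real,
      Real.norm_eq_abs, abs_of_pos h1a]
  have n1a2 : ‖1 - (a:ℂ)^2‖ = 1 - a^2 := by
    rw [show (1:ℂ)-(a:ℂ)^2 = ((1-a^2:ℝ):ℂ) by push_cast; ring, Complex.norm_real,
      Real.norm_eq_abs, abs_of_pos (by nlinarith)]
  have nm : ‖(m:ℂ)‖ = (m:ℝ) := by simp
  -- bound on ‖1 - aw‖ from above near 1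
  have hup : ‖1 - (a:ℂ)*w‖ ≤ 2*(1-a) := by
    have : (1:ℂ) - (a:ℂ)*w = ((1:ℂ)-(a:ℂ)) + (a:ℂ)*(1-w) := by ring
    rw [this]
    calc ‖((1:ℂ)-(a:ℂ)) + (a:ℂ)*(1-w)‖ ≤ ‖(1:ℂ)-(a:ℂ)‖ + ‖(a:ℂ)*(1-w)‖ := norm_add_le _ _
      _ ≤ (1-a) + (1-a) := by
          rw [n1a, norm_mul, na]
          have h1 : ‖(1:ℂ)-w‖ = ‖w-1‖ := by rw [norm_sub_rev]
          nlinarith [norm_nonneg (w-1)]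
      _ = 2*(1-a) := by ring
  -- term 1 bound
  have hT1 : ‖u^(m-1) * (((1:ℂ)-(a:ℂ))^2 - (1-(a:ℂ)*w)^2) / ((1-(a:ℂ)*w)^2 * ((1:ℂ)-(a:ℂ))^2)‖
      ≤ 3 * ‖w-1‖ / (1-a)^3 := by
    simp only [norm_div, norm_mul, norm_pow, hsq, na, n1a]
    have hu1 : ‖u‖^(m-1) ≤ 1 := pow_le_one₀ (norm_nonneg _) hule
    have hsum : ‖((1:ℂ)-(a:ℂ)) + (1-(a:ℂ)*w)‖ ≤ 3*(1-a) := by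
      calc ‖((1:ℂ)-(a:ℂ)) + (1-(a:ℂ)*w)‖ ≤ ‖(1:ℂ)-(a:ℂ)‖ + ‖1-(a:ℂ)*w‖ := norm_add_le _ _
        _ ≤ (1-a) + 2*(1-a) := by rw [n1a]; linarith
        _ = 3*(1-a) := by ring
    have hden2 : (1-a)^2 * (1-a)^2 ≤ ‖1-(a:ℂ)*w‖^2 * (1-a)^2 := by
      have : (1-a)^2 ≤ ‖1-(a:ℂ)*w‖^2 := by nlinarith [norm_nonneg (1-(a:ℂ)*w)]
      nlinarith [pow_pos h1a 2]
    have hpos : 0 < ‖1-(a:ℂ)*w‖^2 * (1-a)^2 :=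
      mul_pos (pow_pos (lt_of_lt_of_le h1a hd) 2) (pow_pos h1a 2)
    rw [div_le_div_iff₀ hpos (by positivity)]
    have hnum : ‖u‖^(m-1) * (a * ‖w-1‖ * ‖((1:ℂ)-(a:ℂ)) + (1-(a:ℂ)*w)‖) ≤ ‖w-1‖ * (3*(1-a)) := by
      have h1 : a * ‖w-1‖ * ‖((1:ℂ)-(a:ℂ)) + (1-(a:ℂ)*w)‖ ≤ 1 * ‖w-1‖ * (3*(1-a)) := by
        have := mul_le_mul_of_nonneg_left hsum (mul_nonneg (le_of_lt ha0) (norm_nonneg (w-1)))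
        nlinarith [norm_nonneg (w-1)]
      calc ‖u‖^(m-1) * (a * ‖w-1‖ * ‖((1:ℂ)-(a:ℂ)) + (1-(a:ℂ)*w)‖)
          ≤ 1 * (a * ‖w-1‖ * ‖((1:ℂ)-(a:ℂ)) + (1-(a:ℂ)*w)‖) := by
            apply mul_le_mul_of_nonneg_right hu1
            positivity
        _ ≤ ‖w-1‖ * (3*(1-a)) := by nlinarith
    calc ‖u‖^(m-1) * (a * ‖w-1‖ * ‖((1:ℂ)-(a:ℂ)) + (1-(a:ℂ)*w)‖) * (1-a)^3
        ≤ (‖w-1‖ * (3*(1-a))) * (1-a)^3 := by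
          apply mul_le_mul_of_nonneg_right hnum; positivity
      _ = 3*‖w-1‖ * ((1-a)^2*(1-a)^2) := by ring
      _ ≤ 3*‖w-1‖ * (‖1-(a:ℂ)*w‖^2*(1-a)^2) := by
          apply mul_le_mul_of_nonneg_left hden2; positivity
  -- term 2 bound
  have hT2 : ‖(u^(m-1) - 1) / ((1:ℂ)-(a:ℂ))^2‖ ≤ (m:ℝ) * (2*‖w-1‖/(1-a)) / (1-a)^2 := by
    rw [norm_div, norm_pow, n1a]
    apply div_le_div_of_nonneg_right ?_ (by positivity)
    calc ‖u^(m-1) - 1‖ ≤ (m-1 : ℕ) * ‖u - 1‖ := geom_aux u hule (m-1)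
      _ ≤ (m:ℝ) * (2*‖w-1‖/(1-a)) := by
          have h1 : ((m-1:ℕ):ℝ) ≤ (m:ℝ) := by exact_mod_cast Nat.sub_le m 1
          have h2 : ‖u - 1‖ ≤ 2*‖w-1‖/(1-a) := bb_sub_one ha0 ha1 hw
          have := mul_le_mul h1 h2 (norm_nonneg _) (Nat.cast_nonneg m)
          linarith
  calc ‖(m:ℂ) * (1 - (a:ℂ)^2) * (u^(m-1) * (((1:ℂ)-(a:ℂ))^2 - (1-(a:ℂ)*w)^2) / ((1-(a:ℂ)*w)^2 * ((1:ℂ)-(a:ℂ))^2) + (u^(m-1) - 1) / ((1:ℂ)-(a:ℂ))^2)‖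
      ≤ (m:ℝ) * (1-a^2) * (3*‖w-1‖/(1-a)^3 + (m:ℝ) * (2*‖w-1‖/(1-a)) / (1-a)^2) := by
        rw [norm_mul, norm_mul, nm, n1a2]
        have ha2 : (0:ℝ) ≤ 1 - a^2 := by nlinarith
        apply mul_le_mul_of_nonneg_left ?_ (mul_nonneg (Nat.cast_nonneg _) ha2)
        calc ‖u^(m-1) * (((1:ℂ)-(a:ℂ))^2 - (1-(a:ℂ)*w)^2) / ((1-(a:ℂ)*w)^2 * ((1:ℂ)-(a:ℂ))^2) + (u^(m-1) - 1) / ((1:ℂ)-(a:ℂ))^2‖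
            ≤ ‖u^(m-1) * (((1:ℂ)-(a:ℂ))^2 - (1-(a:ℂ)*w)^2) / ((1-(a:ℂ)*w)^2 * ((1:ℂ)-(a:ℂ))^2)‖ + ‖(u^(m-1) - 1) / ((1:ℂ)-(a:ℂ))^2‖ := norm_add_le _ _
          _ ≤ 3*‖w-1‖/(1-a)^3 + (m:ℝ) * (2*‖w-1‖/(1-a)) / (1-a)^2 := add_le_add hT1 hT2
    _ ≤ 10 * (m/(1-a))^2 * ‖w - 1‖ := by
        have hm1 : (1:ℝ) ≤ (m:ℝ) := by exact_mod_cast hm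
        have key : (m:ℝ) * (1-a^2) * (3*‖w-1‖/(1-a)^3 + (m:ℝ) * (2*‖w-1‖/(1-a)) / (1-a)^2)
            = ((m:ℝ) * (1-a^2) * (3 + 2*(m:ℝ)) / (1-a)^3) * ‖w-1‖ := by
          field_simp
        rw [key]
        apply mul_le_mul_of_nonneg_right ?_ (norm_nonneg _)
        have h2 : 1 - a^2 ≤ 2*(1-a) := by nlinarith
        have h3 : 3 + 2*(m:ℝ) ≤ 5*(m:ℝ) := by linarith
        have hnum : (m:ℝ) * (1-a^2) * (3+2*(m:ℝ)) ≤ 10*(m:ℝ)^2*(1-a) := by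
          nlinarith [mul_le_mul (mul_le_mul_of_nonneg_left h2 (Nat.cast_nonneg (α := ℝ) m)) h3
            (by linarith) (by positivity)]
        rw [div_le_iff₀ (pow_pos h1a 3)]
        have e : (10*((m:ℝ)/(1-a))^2)*(1-a)^3 = 10*(m:ℝ)^2*(1-a) := by
          field_simp
        rw [e]
        exact hnum

lemma hasDerivAt_BB (ha0 : 0 < a) (ha1 : a < 1) (hne : 1 - (a:ℂ)*w ≠ 0) :
    HasDerivAt (BB a m) (B1 a m w) w := by
  have h1 : HasDerivAt (fun w : ℂ => w - (a:ℂ)) 1 w := (hasDerivAt_id w).sub_const _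
  have h2 : HasDerivAt (fun w : ℂ => 1 - (a:ℂ)*w) (-(a:ℂ)) w := by
    simpa using ((hasDerivAt_id w).const_mul (a:ℂ)).const_sub 1
  have hb : HasDerivAt (bb a) ((1 - (a:ℂ)^2)/(1-(a:ℂ)*w)^2) w := by
    have := h1.div h2 hne
    refine this.congr_deriv ?_
    ring
  exact hb.pow m

/-- points of the chord [1, z] stay in the closed unit disk -/
lemma chord_mem (hz : ‖z‖ ≤ 1) {t : ℝ} (ht0 : 0 ≤ t) (ht1 : t ≤ 1) :
    ‖(1:ℂ) + (t:ℂ)*(z-1)‖ ≤ 1 := by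
  have e : (1:ℂ) + (t:ℂ)*(z-1) = ((1-t:ℝ):ℂ) + (t:ℂ)*z := by push_cast; ring
  rw [e]
  calc ‖((1-t:ℝ):ℂ) + (t:ℂ)*z‖ ≤ ‖((1-t:ℝ):ℂ)‖ + ‖(t:ℂ)*z‖ := norm_add_le _ _
    _ ≤ (1-t) + t*1 := by
        rw [norm_mul, Complex.norm_real, Complex.norm_real, Real.norm_eq_abs, Real.norm_eq_abs,
          _root_.abs_of_nonneg (by linarith), _root_.abs_of_nonneg ht0]
        nlinarith [norm_nonneg z]
    _ = 1 := by ring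

lemma cont_B1_chord (ha0 : 0 < a) (ha1 : a < 1) (hz : ‖z‖ ≤ 1) :
    ContinuousOn (fun t : ℝ => B1 a m (1 + (t:ℂ)*(z-1))) (Set.uIcc (0:ℝ) 1) := by
  rw [Set.uIcc_of_le (zero_le_one)]
  have hγ : Continuous (fun t : ℝ => (1:ℂ) + (t:ℂ)*(z-1)) := by continuity
  have hne : ∀ t ∈ Set.Icc (0:ℝ) 1, 1 - (a:ℂ)*((1:ℂ) + (t:ℂ)*(z-1)) ≠ 0 := fun t ht =>
    hden_ne ha0 ha1 (chord_mem hz ht.1 ht.2)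
  have hbb : ContinuousOn (fun t : ℝ => bb a ((1:ℂ) + (t:ℂ)*(z-1))) (Set.Icc (0:ℝ) 1) := by
    apply ContinuousOn.div
    · exact (hγ.sub continuous_const).continuousOn
    · exact (continuous_const.sub (continuous_const.mul hγ)).continuousOn
    · exact hne
  apply ContinuousOn.mul
  · exact continuousOn_const.mul (hbb.pow _)
  · apply ContinuousOn.div continuousOn_const
    · exact ((continuous_const.sub (continuous_const.mul hγ)).pow 2).continuousOn
    · exact fun t ht => pow_ne_zero 2 (hne t ht)

lemma chord_formula (ha0 : 0 < a) (ha1 : a < 1) (hz : ‖z‖ ≤ 1) (hz1 : z ≠ 1) :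
    gg a m z = ∫ t in (0:ℝ)..1, B1 a m (1 + (t:ℂ)*(z-1)) := by
  have hderiv : ∀ t ∈ Set.uIcc (0:ℝ) 1,
      HasDerivAt (fun s : ℝ => BB a m (1 + (s:ℂ)*(z-1)))
        ((z-1) * B1 a m (1+(t:ℂ)*(z-1))) t := by
    intro t ht
    rw [Set.uIcc_of_le zero_le_one] at ht
    have hw : ‖(1:ℂ)+(t:ℂ)*(z-1)‖ ≤ 1 := chord_mem hz ht.1 ht.2
    have hBB := hasDerivAt_BB (m := m) ha0 ha1 (hden_ne ha0 ha1 hw)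
    have hF : HasDerivAt (fun u : ℂ => 1 + u*(z-1)) (z-1) ((t:ℂ)) := by
      simpa using ((hasDerivAt_id ((t:ℂ))).mul_const (z-1)).const_add 1
    have hcomp := (hBB.comp ((t:ℂ)) hF).comp_ofReal
    simpa [Function.comp, mul_comm] using hcomp
  have hInt : IntervalIntegrable (fun t : ℝ => (z-1) * B1 a m (1 + (t:ℂ)*(z-1)))
      volume 0 1 :=
    (continuousOn_const.mul (cont_B1_chord ha0 ha1 hz)).intervalIntegrable
  have key := intervalIntegral.integral_eq_sub_of_hasDerivAt hderiv hInt
  have e1 : (1:ℂ) + ((1:ℝ):ℂ)*(z-1) = z := by push_cast; ring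
  have e0 : (1:ℂ) + ((0:ℝ):ℂ)*(z-1) = 1 := by push_cast; ring
  rw [e1, e0, BB_one ha1, intervalIntegral.integral_const_mul] at key
  have hz1' : z - 1 ≠ 0 := sub_ne_zero.mpr hz1
  have : (∫ t in (0:ℝ)..1, B1 a m (1 + (t:ℂ)*(z-1))) = (BB a m z - 1)/(z-1) := by
    rw [eq_div_iff hz1', mul_comm]
    exact key
  rw [this, gg]
  rw [show (1:ℂ) - BB a m z = -(BB a m z - 1) by ring, show (1:ℂ) - z = -(z-1) by ring,
    neg_div_neg_eq]

lemma g_le (ha0 : 0 < a) (ha1 : a < 1) (hm : 1 ≤ m) (hz : ‖z‖ ≤ 1) (hz1 : z ≠ 1) :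
    ‖gg a m z‖ ≤ 2*m/(1-a) := by
  rw [chord_formula ha0 ha1 hz hz1]
  have := intervalIntegral.norm_integral_le_of_norm_le_const
    (C := 2*m/(1-a)) (f := fun t : ℝ => B1 a m (1 + (t:ℂ)*(z-1))) (a := (0:ℝ)) (b := 1) ?_
  · simpa using this
  · intro t ht
    rw [Set.uIoc_of_le zero_le_one] at ht
    exact hB1_le ha0 ha1 hm (chord_mem hz (le_of_lt ht.1) ht.2)

lemma g_le' (ha0 : 0 < a) (ha1 : a < 1) (hz : ‖z‖ ≤ 1) (hz1 : z ≠ 1) :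
    ‖gg a m z‖ ≤ 2/‖1-z‖ := by
  have hz1' : (1:ℂ) - z ≠ 0 := sub_ne_zero.mpr (fun h => hz1 h.symm)
  rw [gg, norm_div]
  apply (div_le_div_iff_of_pos_right (norm_pos_iff.mpr hz1')).mpr
  calc ‖1 - BB a m z‖ ≤ ‖(1:ℂ)‖ + ‖BB a m z‖ := norm_sub_le _ _
    _ ≤ 1 + 1 := by
        rw [norm_one]
        exact add_le_add_right (hBB_le ha0 ha1 hz) 1
    _ = 2 := by norm_num

lemma g_re (ha0 : 0 < a) (ha1 : a < 1) (hm : 1 ≤ m) (hz : ‖z‖ ≤ 1) (hz1 : z ≠ 1)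
    (hclose : ‖z-1‖ ≤ (1-a)/(32*m)) :
    (m:ℝ)/(2*(1-a)) ≤ (gg a m z).re := by
  have h1a : (0:ℝ) < 1 - a := by linarith
  have hm' : (1:ℝ) ≤ (m:ℝ) := by exact_mod_cast hm
  have hInt : IntervalIntegrable (fun t : ℝ => B1 a m (1 + (t:ℂ)*(z-1))) volume 0 1 :=
    (cont_B1_chord ha0 ha1 hz).intervalIntegrable
  rw [chord_formula ha0 ha1 hz hz1]
  have hre := Complex.reCLM.intervalIntegral_comp_comm hInt (a := 0) (b := 1)
  simp only [Complex.reCLM_apply] at hre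
  rw [← hre]
  have hIntRe : IntervalIntegrable (fun t : ℝ => (B1 a m (1 + (t:ℂ)*(z-1))).re) volume 0 1 := by
    apply ContinuousOn.intervalIntegrable
    exact Complex.continuous_re.comp_continuousOn (by
      rw [Set.uIcc_of_le zero_le_one] at *
      exact (cont_B1_chord ha0 ha1 hz).mono (by rw [Set.uIcc_of_le zero_le_one]))
  have hpt : ∀ t ∈ Set.Icc (0:ℝ) 1, (m:ℝ)/(2*(1-a)) ≤ (B1 a m (1 + (t:ℂ)*(z-1))).re := by
    intro t ht
    set w₀ := (1:ℂ) + (t:ℂ)*(z-1) with hw₀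
    have hw : ‖w₀‖ ≤ 1 := chord_mem hz ht.1 ht.2
    have hwd : ‖w₀ - 1‖ ≤ (1-a)/(32*m) := by
      have e : w₀ - 1 = (t:ℂ)*(z-1) := by rw [hw₀]; ring
      rw [e, norm_mul, Complex.norm_real, Real.norm_eq_abs, _root_.abs_of_nonneg ht.1]
      calc t * ‖z-1‖ ≤ 1 * ‖z-1‖ := mul_le_mul_of_nonneg_right ht.2 (norm_nonneg _)
        _ ≤ (1-a)/(32*m) := by rw [one_mul]; exact hclose
    have hwd' : ‖w₀ - 1‖ ≤ 1 - a := by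
      apply hwd.trans
      rw [div_le_iff₀ (by positivity)]
      nlinarith
    have hlip := hB1_lip ha0 ha1 hm hw hwd'
    have hre1 : (B1 a m 1).re = m * (1-a^2)/(1-a)^2 := by
      rw [B1_one ha1, Complex.ofReal_re]
    have hdiff : (B1 a m w₀ - B1 a m 1).re ≥ -(10 * ((m:ℝ)/(1-a))^2 * ‖w₀-1‖) := by
      have h1 := (abs_le.mp (Complex.abs_re_le_norm (B1 a m w₀ - B1 a m 1))).1
      have h2 : ‖B1 a m w₀ - B1 a m 1‖ = ‖B1 a m w₀ - B1 a m 1‖ := rfl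
      linarith [hlip, neg_le_neg hlip]
    have hrest : 10 * ((m:ℝ)/(1-a))^2 * ‖w₀-1‖ ≤ (10/32) * (m:ℝ)/(1-a) := by
      calc 10 * ((m:ℝ)/(1-a))^2 * ‖w₀-1‖ ≤ 10 * ((m:ℝ)/(1-a))^2 * ((1-a)/(32*m)) := by
            apply mul_le_mul_of_nonneg_left hwd (by positivity)
        _ = (10/32) * (m:ℝ)/(1-a) := by field_simp
    have hlow : (m:ℝ)/(1-a) ≤ m * (1-a^2)/(1-a)^2 := by
      rw [div_le_div_iff₀ h1a (by positivity)]
      nlinarith [mul_nonneg (mul_nonneg (Nat.cast_nonneg (α := ℝ) m) (le_of_lt ha0)) (le_of_lt h1a),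
        mul_pos h1a ha0]
    have : (B1 a m w₀).re = (B1 a m 1).re + (B1 a m w₀ - B1 a m 1).re := by
      simp [Complex.sub_re]
    rw [this, hre1]
    have h325 : (10/32) * (m:ℝ)/(1-a) ≤ (1/2) * (m:ℝ)/(1-a) :=
      (div_le_div_iff_of_pos_right h1a).mpr (by nlinarith)
    have hfin : (m:ℝ)/(2*(1-a)) = (m:ℝ)/(1-a) - (1/2)*(m:ℝ)/(1-a) := by
      field_simp
      ring
    linarith
  calc (m:ℝ)/(2*(1-a)) = ∫ t in (0:ℝ)..1, ((m:ℝ)/(2*(1-a))) := by simp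
    _ ≤ ∫ t in (0:ℝ)..1, (B1 a m (1 + (t:ℂ)*(z-1))).re := by
        apply intervalIntegral.integral_mono_on zero_le_one intervalIntegrable_const hIntRe hpt

def TT (a : ℝ) (m : ℕ) : Polynomial ℂ := (C 1 - C (a:ℂ) * X)^m - (X - C (a:ℂ))^m
def SS (a : ℝ) (m : ℕ) : Polynomial ℂ := TT a m /ₘ (X - C 1)
def PP (a : ℝ) (m : ℕ) : Polynomial ℂ := (SS a m)^2
def QQ (a : ℝ) (m : ℕ) : Polynomial ℂ := (C 1 - C (a:ℂ) * X)^(m*2)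

variable {a : ℝ} {m : ℕ} {z : ℂ}

lemma TT_eval_one : (TT a m).eval 1 = 0 := by
  simp [TT]

lemma TT_eq : TT a m = (X - C 1) * SS a m := by
  have h2 : TT a m %ₘ (X - C 1) = 0 := by
    rw [modByMonic_X_sub_C_eq_C_eval, TT_eval_one, map_zero]
  have h := modByMonic_add_div (TT a m) (X - C 1)
  rw [h2, zero_add] at h
  exact h.symm

lemma natDegree_TT : (TT a m).natDegree ≤ m := by
  apply le_trans (natDegree_sub_le _ _)
  apply max_le
  · apply le_trans (natDegree_pow_le)
    have h1 : (C 1 - C (a:ℂ) * X).natDegree ≤ 1 := by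
      apply le_trans (natDegree_sub_le _ _)
      apply max_le
      · simp
      · exact le_trans (natDegree_C_mul_le _ _) natDegree_X_le
    calc m * (C 1 - C (a:ℂ) * X).natDegree ≤ m * 1 := Nat.mul_le_mul_left m h1
      _ = m := Nat.mul_one m
  · apply le_trans (natDegree_pow_le)
    rw [natDegree_X_sub_C]
    omega

lemma natDegree_SS : (SS a m).natDegree ≤ m := by
  rw [SS, natDegree_divByMonic _ (monic_X_sub_C (1:ℂ))]
  have := natDegree_TT (a := a) (m := m)
  omega

lemma natDegree_PP : (PP a m).natDegree ≤ 2*m := by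
  apply le_trans (natDegree_pow_le)
  have := natDegree_SS (a := a) (m := m)
  omega

lemma natDegree_QQ : (QQ a m).natDegree ≤ 2*m := by
  apply le_trans (natDegree_pow_le)
  have h1 : (C 1 - C (a:ℂ) * X).natDegree ≤ 1 := by
    apply le_trans (natDegree_sub_le _ _)
    apply max_le
    · simp
    · exact le_trans (natDegree_C_mul_le _ _) natDegree_X_le
  calc (m*2) * (C 1 - C (a:ℂ)*X).natDegree ≤ (m*2)*1 := Nat.mul_le_mul_left _ h1
    _ = 2*m := by omega

lemma QQ_eval : (QQ a m).eval z = ((1 - (a:ℂ)*z)^m)^2 := by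
  simp [QQ, ← pow_mul]

lemma ratval (hne : (1:ℂ) - (a:ℂ)*z ≠ 0) (hz1 : z ≠ 1) :
    (PP a m).eval z / (QQ a m).eval z = (gg a m z)^2 := by
  have hz1' : z - 1 ≠ 0 := sub_ne_zero.mpr hz1
  have h1z : (1:ℂ) - z ≠ 0 := sub_ne_zero.mpr (Ne.symm hz1)
  have hD : (1 - (a:ℂ)*z)^m ≠ 0 := pow_ne_zero m hne
  have hTz : (TT a m).eval z = (1-(a:ℂ)*z)^m * (1 - BB a m z) := by
    simp only [TT, eval_sub, eval_pow, eval_mul, eval_C, eval_X, BB, bb]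
    rw [div_pow, mul_sub, mul_one, mul_div_cancel₀ _ hD]
  have hSz : (z - 1) * (SS a m).eval z = (TT a m).eval z := by
    conv_rhs => rw [TT_eq]
    simp [eval_mul]
  have hgg : gg a m z = -((SS a m).eval z / (1-(a:ℂ)*z)^m) := by
    rw [gg, ← neg_div, div_eq_div_iff h1z hD]
    have e : (1 - BB a m z) * (1-(a:ℂ)*z)^m = (z-1)*(SS a m).eval z := by
      rw [hSz, hTz]; ring
    linear_combination e
  have hP : (PP a m).eval z = ((SS a m).eval z)^2 := by simp [PP]
  rw [hP, QQ_eval, hgg]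
  rw [neg_pow, div_pow]
  ring

lemma two_pi_pos : (0:ℝ) < 2*π := by positivity

lemma mT_Ioc {ε : ℝ} (hε0 : 0 < ε) (hε2 : ε ≤ 2*π) :
    mT (Set.Ioc 0 ε) = ENNReal.ofReal (ε / (2*π)) := by
  rw [mT, Measure.smul_apply, Measure.restrict_apply measurableSet_Ioc]
  rw [Set.inter_eq_left.mpr (Set.Ioc_subset_Ioc le_rfl hε2), Real.volume_Ioc, sub_zero]
  rw [ENNReal.ofReal_div_of_pos two_pi_pos, ENNReal.div_eq_inv_mul]
  rfl

lemma mT_ae_Ioo : ∀ᵐ θ ∂mT, θ ∈ Set.Ioo 0 (2*π) := by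
  rw [Filter.eventually_iff, mem_ae_iff]
  have h1 : {θ : ℝ | θ ∈ Set.Ioo 0 (2*π)}ᶜ = (Set.Ioo 0 (2*π))ᶜ := rfl
  rw [h1, mT, Measure.smul_apply, Measure.restrict_apply measurableSet_Ioo.compl]
  have h2 : (Set.Ioo 0 (2*π))ᶜ ∩ Set.Ioc 0 (2*π) = {2*π} := by
    ext θ
    simp only [Set.mem_inter_iff, Set.mem_compl_iff, Set.mem_Ioo, Set.mem_Ioc,
      Set.mem_singleton_iff, not_and, not_lt]
    constructor
    · rintro ⟨h3, h4, h5⟩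
      exact le_antisymm h5 (h3 h4)
    · rintro rfl
      exact ⟨fun _ => le_rfl, two_pi_pos, le_rfl⟩
  rw [h2, Real.volume_singleton, smul_zero]

lemma eLp_lower (F : ℝ → ℂ) {q : ℝ≥0∞} (hq0 : q ≠ 0) (hqt : q ≠ ∞) {c ε : ℝ} (hc : 0 ≤ c)
    (hε0 : 0 < ε) (hε2 : ε ≤ 2*π) (h : ∀ θ ∈ Set.Ioc 0 ε, c ≤ ‖F θ‖) :
    ENNReal.ofReal c * ENNReal.ofReal (ε/(2*π)) ^ (1/q.toReal) ≤ eLpNorm F q mT := by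
  have hq' : 0 < q.toReal := ENNReal.toReal_pos hq0 hqt
  rw [eLpNorm_eq_lintegral_rpow_enorm_toReal hq0 hqt]
  have step1 : ENNReal.ofReal c ^ q.toReal * mT (Set.Ioc 0 ε)
      ≤ ∫⁻ θ, (‖F θ‖₊ : ℝ≥0∞) ^ q.toReal ∂mT := by
    calc ENNReal.ofReal c ^ q.toReal * mT (Set.Ioc 0 ε)
        = ∫⁻ _ in Set.Ioc 0 ε, ENNReal.ofReal c ^ q.toReal ∂mT :=
          (setLIntegral_const _ _).symm
      _ ≤ ∫⁻ θ in Set.Ioc 0 ε, (‖F θ‖₊ : ℝ≥0∞) ^ q.toReal ∂mT := by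
          apply lintegral_mono_ae
          apply (ae_restrict_iff' measurableSet_Ioc).2 (ae_of_all _ ?_)
          intro θ hθ
          apply ENNReal.rpow_le_rpow ?_ (le_of_lt hq')
          rw [← enorm_eq_nnnorm, ← ofReal_norm]
          exact ENNReal.ofReal_le_ofReal (h θ hθ)
      _ ≤ _ := setLIntegral_le_lintegral _ _
  calc ENNReal.ofReal c * ENNReal.ofReal (ε/(2*π)) ^ (1/q.toReal)
      = (ENNReal.ofReal c ^ q.toReal * mT (Set.Ioc 0 ε)) ^ (1/q.toReal) := by
        rw [ENNReal.mul_rpow_of_nonneg _ _ (by positivity), ← ENNReal.rpow_mul,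
          mul_one_div, div_self (ne_of_gt hq'), ENNReal.rpow_one, mT_Ioc hε0 hε2]
    _ ≤ _ := ENNReal.rpow_le_rpow step1 (by positivity)

lemma eLp_lower_top (F : ℝ → ℂ) {c ε : ℝ} (hε0 : 0 < ε) (hε2 : ε ≤ 2*π)
    (h : ∀ θ ∈ Set.Ioc 0 ε, c ≤ ‖F θ‖) : ENNReal.ofReal c ≤ eLpNorm F ⊤ mT := by
  rw [eLpNorm_exponent_top]
  have hμ : mT (Set.Ioc 0 ε) ≠ 0 := by
    rw [mT_Ioc hε0 hε2]
    simp only [ne_eq, ENNReal.ofReal_eq_zero, not_le]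
    positivity
  set t := {θ : ℝ | (‖F θ‖₊ : ℝ≥0∞) ≤ eLpNormEssSup F mT} with ht
  have htc : mT tᶜ = 0 := by
    have hae := ae_le_eLpNormEssSup (f := F) (μ := mT)
    rw [Filter.eventually_iff, mem_ae_iff] at hae
    exact hae
  have hst : (Set.Ioc 0 ε ∩ t).Nonempty := by
    apply MeasureTheory.nonempty_of_measure_ne_zero (μ := mT)
    intro h0
    apply hμ
    have : mT (Set.Ioc 0 ε) ≤ mT (Set.Ioc 0 ε ∩ t) + mT tᶜ := by
      apply le_trans (measure_mono ?_) (measure_union_le _ _)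
      intro θ hθ
      by_cases hmem : θ ∈ t
      · exact Or.inl ⟨hθ, hmem⟩
      · exact Or.inr hmem
    rw [h0, htc, add_zero] at this
    exact le_antisymm this zero_le
  obtain ⟨θ, hθs, hθt⟩ := hst
  calc ENNReal.ofReal c ≤ ENNReal.ofReal ‖F θ‖ := ENNReal.ofReal_le_ofReal (h θ hθs)
    _ = (‖F θ‖₊ : ℝ≥0∞) := ofReal_norm _
    _ ≤ _ := hθt

lemma eLp_upper (F : ℝ → ℂ) {p : ℝ≥0∞} (hp0 : p ≠ 0) (hpt : p ≠ ∞) (hp1 : 1 ≤ p.toReal)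
    {Cb I : ℝ} (hbd : ∀ᵐ θ ∂mT, ‖F θ‖ ≤ Cb)
    (hL1 : ∫⁻ θ, (‖F θ‖₊ : ℝ≥0∞) ∂mT ≤ ENNReal.ofReal I) :
    eLpNorm F p mT ≤ ENNReal.ofReal Cb ^ (1 - 1/p.toReal) * ENNReal.ofReal I ^ (1/p.toReal) := by
  have hp' : 0 < p.toReal := by linarith
  rw [eLpNorm_eq_lintegral_rpow_enorm_toReal hp0 hpt]
  have key : ∫⁻ θ, (‖F θ‖₊ : ℝ≥0∞) ^ p.toReal ∂mT
      ≤ ENNReal.ofReal Cb ^ (p.toReal - 1) * ENNReal.ofReal I := by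
    calc ∫⁻ θ, (‖F θ‖₊ : ℝ≥0∞) ^ p.toReal ∂mT
        ≤ ∫⁻ θ, ENNReal.ofReal Cb ^ (p.toReal - 1) * (‖F θ‖₊ : ℝ≥0∞) ∂mT := by
          apply lintegral_mono_ae
          apply hbd.mono
          intro θ hθ
          have e : (‖F θ‖₊ : ℝ≥0∞) ^ p.toReal
              = (‖F θ‖₊ : ℝ≥0∞) ^ (p.toReal - 1) * (‖F θ‖₊ : ℝ≥0∞) := by
            have e2 := ENNReal.rpow_add_of_nonneg (x := (‖F θ‖₊ : ℝ≥0∞)) (p.toReal - 1) 1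
              (by linarith) zero_le_one
            rw [show p.toReal = (p.toReal - 1) + 1 by ring, e2, ENNReal.rpow_one]
            norm_num
          rw [e]
          apply mul_le_mul_left
          apply ENNReal.rpow_le_rpow ?_ (by linarith)
          rw [← enorm_eq_nnnorm, ← ofReal_norm]
          exact ENNReal.ofReal_le_ofReal hθ
      _ = ENNReal.ofReal Cb ^ (p.toReal - 1) * ∫⁻ θ, (‖F θ‖₊ : ℝ≥0∞) ∂mT :=
          lintegral_const_mul' _ _
            (ENNReal.rpow_ne_top_of_nonneg (by linarith) ENNReal.ofReal_ne_top)
      _ ≤ _ := mul_le_mul_right hL1 _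
  calc (∫⁻ θ, (‖F θ‖₊ : ℝ≥0∞) ^ p.toReal ∂mT) ^ (1/p.toReal)
      ≤ (ENNReal.ofReal Cb ^ (p.toReal - 1) * ENNReal.ofReal I) ^ (1/p.toReal) :=
        ENNReal.rpow_le_rpow key (by positivity)
    _ = ENNReal.ofReal Cb ^ (1 - 1/p.toReal) * ENNReal.ofReal I ^ (1/p.toReal) := by
        rw [ENNReal.mul_rpow_of_nonneg _ _ (by positivity), ← ENNReal.rpow_mul]
        congr 2
        field_simp

lemma L1_bound (F : ℝ → ℂ) {K : ℝ} (hK : 1 ≤ K)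
    (hb1 : ∀ θ ∈ Set.Ioo 0 (2*π), ‖F θ‖ ≤ 4*K^2)
    (hb2 : ∀ θ ∈ Set.Ioo 0 (2*π), ‖F θ‖ ≤ π^2/(min θ (2*π - θ))^2) :
    ∫⁻ θ, (‖F θ‖₊ : ℝ≥0∞) ∂mT ≤ ENNReal.ofReal (5*K) := by
  have hK0 : 0 < K := by linarith
  set s0 : ℝ := 1/K with hs0def
  have hs0 : 0 < s0 := by positivity
  have hs01 : s0 ≤ 1 := by rw [hs0def, div_le_one hK0]; exact hK
  have hπ3 : (3:ℝ) < π := Real.pi_gt_three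
  have hs0π : s0 < π := by linarith
  have hle : s0 ≤ 2*π - s0 := by linarith
  have hb2π : 2*π - s0 ≤ 2*π := by linarith
  have hJ1 : ∫⁻ θ in Set.Ioc 0 s0, (‖F θ‖₊ : ℝ≥0∞) ∂volume ≤ ENNReal.ofReal (4*K) := by
    calc ∫⁻ θ in Set.Ioc 0 s0, (‖F θ‖₊ : ℝ≥0∞) ∂volume
        ≤ ∫⁻ _ in Set.Ioc 0 s0, ENNReal.ofReal (4*K^2) ∂volume := by
          apply lintegral_mono_ae
          apply (ae_restrict_iff' measurableSet_Ioc).2 (ae_of_all _ ?_)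
          intro θ hθ
          rw [← enorm_eq_nnnorm, ← ofReal_norm]
          exact ENNReal.ofReal_le_ofReal (hb1 θ ⟨hθ.1, by nlinarith [hθ.2]⟩)
      _ = ENNReal.ofReal (4*K^2) * ENNReal.ofReal s0 := by
          rw [setLIntegral_const, Real.volume_Ioc, sub_zero]
      _ = ENNReal.ofReal (4*K) := by
          rw [← ENNReal.ofReal_mul (by positivity)]
          congr 1
          rw [hs0def]
          field_simp
  have hJ3 : ∫⁻ θ in Set.Ioc (2*π - s0) (2*π), (‖F θ‖₊ : ℝ≥0∞) ∂volume
      ≤ ENNReal.ofReal (4*K) := by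
    have h2π : ∀ᵐ θ ∂(volume.restrict (Set.Ioc (2*π - s0) (2*π))), θ ≠ 2*π := by
      apply ae_restrict_of_ae
      rw [Filter.eventually_iff, mem_ae_iff]
      have he : {θ : ℝ | θ ≠ 2*π}ᶜ = {2*π} := by ext θ; simp
      rw [he]
      exact Real.volume_singleton
    calc ∫⁻ θ in Set.Ioc (2*π-s0) (2*π), (‖F θ‖₊ : ℝ≥0∞) ∂volume
        ≤ ∫⁻ _ in Set.Ioc (2*π-s0) (2*π), ENNReal.ofReal (4*K^2) ∂volume := by
          apply lintegral_mono_ae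
          apply Filter.Eventually.mono
            (((ae_restrict_iff' measurableSet_Ioc).2 (ae_of_all _ (fun θ hθ => hθ))).and h2π)
          rintro θ ⟨hθ, hne⟩
          rw [← enorm_eq_nnnorm, ← ofReal_norm]
          apply ENNReal.ofReal_le_ofReal
          apply hb1 θ
          exact ⟨by nlinarith [hθ.1], lt_of_le_of_ne hθ.2 hne⟩
      _ = ENNReal.ofReal (4*K^2) * ENNReal.ofReal (2*π - (2*π - s0)) := by
          rw [setLIntegral_const, Real.volume_Ioc]
      _ ≤ ENNReal.ofReal (4*K) := by
          rw [show 2*π - (2*π - s0) = s0 by ring, ← ENNReal.ofReal_mul (by positivity)]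
          apply ENNReal.ofReal_le_ofReal
          rw [hs0def, show 4*K^2*(1/K) = 4*K by field_simp]
  have hmid : ∫⁻ θ in Set.Ioc s0 (2*π - s0), (‖F θ‖₊ : ℝ≥0∞) ∂volume
      ≤ ENNReal.ofReal (2*π^2*K) := by
    set h : ℝ → ℝ := fun θ => π^2/θ^2 + π^2/(2*π-θ)^2 with hh
    have hcont : ContinuousOn h (Set.Icc s0 (2*π - s0)) := by
      apply ContinuousOn.add
      · apply ContinuousOn.div continuousOn_const (continuousOn_pow 2)
        intro θ hθ
        exact pow_ne_zero 2 (ne_of_gt (by nlinarith [hθ.1]))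
      · apply ContinuousOn.div continuousOn_const
          ((continuous_const.sub continuous_id).pow 2).continuousOn
        intro θ hθ
        exact pow_ne_zero 2 (ne_of_gt (by simp only [Pi.sub_apply, id_eq]; nlinarith [hθ.2]))
    have hderivG : ∀ θ ∈ Set.uIcc s0 (2*π - s0),
        HasDerivAt (fun t : ℝ => -π^2/t + π^2/(2*π - t)) (h θ) θ := by
      intro θ hθ
      rw [Set.uIcc_of_le hle] at hθ
      have hθ0 : (0:ℝ) < θ := by nlinarith [hθ.1]
      have hθ2 : (0:ℝ) < 2*π - θ := by nlinarith [hθ.2]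
      have h1 : HasDerivAt (fun t : ℝ => -π^2/t) (π^2/θ^2) θ := by
        have e : (fun t : ℝ => -π^2/t) = (fun t : ℝ => -π^2 * t⁻¹) := by
          funext t; rw [div_eq_mul_inv]
        rw [e]
        have := (hasDerivAt_inv (ne_of_gt hθ0)).const_mul (-π^2)
        refine this.congr_deriv ?_
        ring
      have h2 : HasDerivAt (fun t : ℝ => π^2/(2*π - t)) (π^2/(2*π-θ)^2) θ := by
        have hlin : HasDerivAt (fun t : ℝ => 2*π - t) (-1) θ := by
          simpa using (hasDerivAt_id θ).const_sub (2*π)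
        have e : (fun t : ℝ => π^2/(2*π - t)) = (fun t : ℝ => π^2 * (2*π - t)⁻¹) := by
          funext t; rw [div_eq_mul_inv]
        rw [e]
        have := (hlin.inv (ne_of_gt hθ2)).const_mul (π^2)
        refine this.congr_deriv ?_
        ring
      exact h1.add h2
    have hII : IntervalIntegrable h volume s0 (2*π - s0) := by
      apply ContinuousOn.intervalIntegrable
      rwa [Set.uIcc_of_le hle]
    have hFTC := intervalIntegral.integral_eq_sub_of_hasDerivAt hderivG hII
    have hIoc : IntegrableOn h (Set.Ioc s0 (2*π - s0)) volume := by
      have := intervalIntegrable_iff.mp hII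
      rwa [Set.uIoc_of_le hle] at this
    have hpt : ∀ θ ∈ Set.Ioc s0 (2*π - s0), (‖F θ‖₊ : ℝ≥0∞) ≤ ENNReal.ofReal (h θ) := by
      intro θ hθ
      have hmem : θ ∈ Set.Ioo 0 (2*π) := ⟨by nlinarith [hθ.1], by nlinarith [hθ.2]⟩
      rw [← enorm_eq_nnnorm, ← ofReal_norm]
      apply ENNReal.ofReal_le_ofReal
      refine le_trans (hb2 θ hmem) ?_
      rcases min_cases θ (2*π - θ) with ⟨he, _⟩ | ⟨he, _⟩
      · rw [he]
        exact le_add_of_nonneg_right (by positivity)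
      · rw [he]
        exact le_add_of_nonneg_left (by positivity)
    calc ∫⁻ θ in Set.Ioc s0 (2*π-s0), (‖F θ‖₊ : ℝ≥0∞) ∂volume
        ≤ ∫⁻ θ in Set.Ioc s0 (2*π-s0), ENNReal.ofReal (h θ) ∂volume :=
          lintegral_mono_ae ((ae_restrict_iff' measurableSet_Ioc).2 (ae_of_all _ hpt))
      _ = ENNReal.ofReal (∫ θ in Set.Ioc s0 (2*π-s0), h θ ∂volume) :=
          (MeasureTheory.ofReal_integral_eq_lintegral_ofReal hIoc
            (ae_of_all _ (fun θ => by positivity))).symm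
      _ ≤ ENNReal.ofReal (2*π^2*K) := by
          apply ENNReal.ofReal_le_ofReal
          rw [← intervalIntegral.integral_of_le hle, hFTC]
          have h1K : 1/s0 = K := by rw [hs0def, one_div_one_div]
          have hpos : 0 < 2*π - s0 := by nlinarith
          have e : (-π^2/(2*π-s0) + π^2/(2*π - (2*π-s0))) - (-π^2/s0 + π^2/(2*π-s0))
              = 2*π^2*(1/s0) - 2*(π^2/(2*π-s0)) := by ring
          rw [e, h1K]
          have hnn : 0 ≤ π^2/(2*π-s0) := div_nonneg (by positivity) (le_of_lt hpos)
          linarith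
  have hsplit : Set.Ioc (0:ℝ) (2*π)
      = Set.Ioc 0 s0 ∪ (Set.Ioc s0 (2*π - s0) ∪ Set.Ioc (2*π-s0) (2*π)) := by
    rw [Set.Ioc_union_Ioc_eq_Ioc hle hb2π, Set.Ioc_union_Ioc_eq_Ioc (le_of_lt hs0) (by nlinarith)]
  calc ∫⁻ θ, (‖F θ‖₊ : ℝ≥0∞) ∂mT
      = (ENNReal.ofReal (2*π))⁻¹ * ∫⁻ θ in Set.Ioc 0 (2*π), (‖F θ‖₊ : ℝ≥0∞) ∂volume := by
        rw [mT, lintegral_smul_measure, smul_eq_mul]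
    _ ≤ (ENNReal.ofReal (2*π))⁻¹ *
        (ENNReal.ofReal (4*K) + (ENNReal.ofReal (2*π^2*K) + ENNReal.ofReal (4*K))) := by
        apply mul_le_mul_right
        rw [hsplit]
        refine le_trans (lintegral_union_le _ _ _) ?_
        apply add_le_add hJ1
        refine le_trans (lintegral_union_le _ _ _) ?_
        exact add_le_add hmid hJ3
    _ ≤ ENNReal.ofReal (5*K) := by
        rw [← ENNReal.ofReal_add (by positivity) (by positivity),
          ← ENNReal.ofReal_add (by positivity) (by positivity)]
        have e : (ENNReal.ofReal (2*π))⁻¹ * ENNReal.ofReal (4*K + (2*π^2*K + 4*K))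
            = ENNReal.ofReal ((4*K + (2*π^2*K + 4*K))/(2*π)) := by
          rw [ENNReal.ofReal_div_of_pos two_pi_pos, ENNReal.div_eq_inv_mul]
        rw [e]
        apply ENNReal.ofReal_le_ofReal
        rw [div_le_iff₀ two_pi_pos]
        nlinarith [Real.pi_gt_d6, Real.pi_lt_d2,
          mul_le_mul_of_nonneg_right (by nlinarith [Real.pi_gt_d6, Real.pi_lt_d2] :
            8 + 2*π^2 ≤ 10*π) (le_of_lt hK0)]

lemma eθ_norm (θ : ℝ) : ‖eθ θ‖ = 1 := by
  rw [eθ]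
  exact Complex.norm_exp_ofReal_mul_I θ

lemma eθ_ne_one {θ : ℝ} (h0 : 0 < θ) (h2 : θ < 2*π) : eθ θ ≠ 1 := by
  rw [eθ]
  intro hexp
  obtain ⟨n, hn⟩ := Complex.exp_eq_one_iff.mp hexp
  have h2' : (θ:ℂ) * Complex.I = ((n:ℂ) * (2*(π:ℂ))) * Complex.I := by
    rw [hn]; ring
  have hI : (θ:ℂ) = (n:ℂ) * (2*(π:ℂ)) := mul_right_cancel₀ Complex.I_ne_zero h2'
  have hre : θ = (n:ℝ) * (2*π) := by exact_mod_cast hI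
  have hπ : (0:ℝ) < 2*π := by positivity
  rcases le_or_gt n 0 with hn0 | hn1
  · have : (n:ℝ) ≤ 0 := by exact_mod_cast hn0
    nlinarith
  · have : (1:ℝ) ≤ (n:ℝ) := by exact_mod_cast hn1
    nlinarith

lemma eθ_normsq (θ : ℝ) : ‖1 - eθ θ‖^2 = 2 - 2*Real.cos θ := by
  rw [Complex.sq_norm, Complex.normSq_apply, eθ]
  simp only [Complex.sub_re, Complex.sub_im, Complex.one_re, Complex.one_im,
    Complex.exp_ofReal_mul_I_re, Complex.exp_ofReal_mul_I_im]
  nlinarith [Real.sin_sq_add_cos_sq θ]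

lemma sin_half_sq (θ : ℝ) : Real.sin (θ/2)^2 = 1/2 - Real.cos θ / 2 := by
  have h1 := Real.sin_sq_add_cos_sq (θ/2)
  have h2 := Real.cos_sq (θ/2)
  rw [show 2*(θ/2) = θ by ring] at h2
  linarith

lemma eθ_norm_eq (θ : ℝ) (h0 : 0 ≤ θ) (h2 : θ ≤ 2*π) :
    ‖1 - eθ θ‖ = 2 * Real.sin (θ/2) := by
  have hs : 0 ≤ Real.sin (θ/2) :=
    Real.sin_nonneg_of_nonneg_of_le_pi (by linarith) (by linarith)
  have h := eθ_normsq θ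
  have h3 : ‖1 - eθ θ‖^2 = (2 * Real.sin (θ/2))^2 := by
    rw [h]
    nlinarith [sin_half_sq θ]
  nlinarith [norm_nonneg (1 - eθ θ), sq_nonneg (‖1 - eθ θ‖ - 2*Real.sin (θ/2))]

lemma eθ_dist_le (θ : ℝ) (h0 : 0 ≤ θ) (h2 : θ ≤ 2*π) : ‖eθ θ - 1‖ ≤ θ := by
  rw [norm_sub_rev, eθ_norm_eq θ h0 h2]
  have := Real.sin_le (by linarith : 0 ≤ θ/2)
  linarith

lemma eθ_dist_ge (θ : ℝ) (h0 : 0 < θ) (h2 : θ < 2*π) :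
    (2/π) * min θ (2*π - θ) ≤ ‖1 - eθ θ‖ := by
  have hπ : (0:ℝ) < π := Real.pi_pos
  rw [eθ_norm_eq θ (le_of_lt h0) (le_of_lt h2)]
  rcases le_total θ π with hcase | hcase
  · have hmin : min θ (2*π - θ) ≤ θ := min_le_left _ _
    have hsin : 2/π * (θ/2) ≤ Real.sin (θ/2) :=
      Real.mul_le_sin (by linarith) (by linarith)
    calc (2/π) * min θ (2*π-θ) ≤ (2/π) * θ := by
          apply mul_le_mul_of_nonneg_left hmin (by positivity)
      _ = 2 * (2/π * (θ/2)) := by ring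
      _ ≤ 2 * Real.sin (θ/2) := by linarith
  · have hmin : min θ (2*π - θ) ≤ 2*π - θ := min_le_right _ _
    have heq : Real.sin (θ/2) = Real.sin ((2*π - θ)/2) := by
      rw [show (2*π - θ)/2 = π - θ/2 by ring, Real.sin_pi_sub]
    have hsin : 2/π * ((2*π-θ)/2) ≤ Real.sin ((2*π-θ)/2) :=
      Real.mul_le_sin (by linarith) (by linarith)
    calc (2/π) * min θ (2*π-θ) ≤ (2/π) * (2*π-θ) := by
          apply mul_le_mul_of_nonneg_left hmin (by positivity)
      _ = 2 * (2/π * ((2*π-θ)/2)) := by ring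
      _ ≤ 2 * Real.sin ((2*π-θ)/2) := by linarith
      _ = 2 * Real.sin (θ/2) := by rw [heq]

end Aux

/-- Theorem 2.4 (ii), sharpness of the Nikolskii-type inequality.
For `1 ≤ p < q ≤ ∞` there is `c(p,q) > 0` such that for every `r ∈ (0,1)` and `n ≥ 2`
there is a nonzero `f = P/Q ∈ R_{n,r}` with
`‖f‖_{L^q} ≥ c(p,q) (n/(1−r))^{1/p−1/q} ‖f‖_{L^p}`. -/
theorem stmt_8 (p q : ℝ≥0∞) (hp : 1 ≤ p) (hpq : p < q) :
    ∃ c : ℝ, 0 < c ∧ ∀ r : ℝ, 0 < r → r < 1 → ∀ n : ℕ, 2 ≤ n →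
      ∃ P Q : Polynomial ℂ, P.natDegree ≤ n ∧ Q.natDegree ≤ n ∧
        (∀ z : ℂ, r ≤ ‖z‖ → ‖z‖ ≤ 1 / r → Q.eval z ≠ 0) ∧
        (∃ ξ : ℂ, ‖ξ‖ = 1 ∧ P.eval ξ / Q.eval ξ ≠ 0) ∧
        ENNReal.ofReal (c * ((n : ℝ) / (1 - r)) ^ (p.toReal⁻¹ - q.toReal⁻¹)) *
            circLp (fun z => P.eval z / Q.eval z) p ≤
          circLp (fun z => P.eval z / Q.eval z) q := by
  have hπ : (0:ℝ) < π := Real.pi_pos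
  have hπ3 : (3:ℝ) < π := Real.pi_gt_three
  refine ⟨(40960*π)⁻¹, by positivity, ?_⟩
  intro r hr0 hr1 n hn
  set a : ℝ := r^2 with ha_def
  have ha0 : 0 < a := by positivity
  have ha1 : a < 1 := by nlinarith
  have h1a : (0:ℝ) < 1 - a := by linarith
  set m : ℕ := n / 2 with hm_def
  have hm : 1 ≤ m := by omega
  have h2m : 2*m ≤ n := by omega
  have hn4 : (n:ℝ) ≤ 4*(m:ℝ) := by exact_mod_cast (by omega : n ≤ 4*m)
  set K : ℝ := (m:ℝ) / (1-a) with hK_def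
  have hm1 : (1:ℝ) ≤ (m:ℝ) := by exact_mod_cast hm
  have hK1 : 1 ≤ K := by rw [hK_def, le_div_iff₀ h1a]; nlinarith
  have hK0 : 0 < K := by linarith
  have hpt : p ≠ ⊤ := hpq.ne_top
  have hp0 : p ≠ 0 := by intro h; rw [h] at hp; exact absurd hp (by simp)
  have hp1' : 1 ≤ p.toReal := by
    have := ENNReal.toReal_mono hpt hp
    simpa using this
  have hp0' : 0 < p.toReal := by linarith
  have hq0 : q ≠ 0 := by
    intro h
    rw [h] at hpq
    exact absurd hpq (by simp)
  set ε : ℝ := (1-a)/(32*(m:ℝ)) with hε_def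
  have hε0 : 0 < ε := by positivity
  have hεK : ε = 1/(32*K) := by rw [hε_def, hK_def]; field_simp
  have hε1 : ε ≤ 1 := by
    rw [hεK, div_le_one (by positivity)]
    nlinarith
  have hεlt : ε < 2*π := by nlinarith
  have hε2π : ε ≤ 2*π := le_of_lt hεlt
  refine ⟨PP a m, QQ a m, le_trans natDegree_PP h2m, le_trans natDegree_QQ h2m, ?_, ?_, ?_⟩
  · -- Q has no zeros in the annulus
    intro z _ hz2 h0
    rw [QQ_eval] at h0
    have h1 : (1:ℂ) - (a:ℂ)*z = 0 :=
      (pow_eq_zero_iff (by omega : m ≠ 0)).mp ((pow_eq_zero_iff two_ne_zero).mp h0)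
    have h2 : (a:ℂ)*z = 1 := by linear_combination -h1
    have h3 : ‖(a:ℂ)*z‖ = 1 := by rw [h2]; simp
    rw [norm_mul, Complex.norm_real, Real.norm_eq_abs, _root_.abs_of_pos ha0] at h3
    have h4 : a * ‖z‖ ≤ r := by
      rw [ha_def]
      calc r^2 * ‖z‖ ≤ r^2 * (1/r) := by
            apply mul_le_mul_of_nonneg_left hz2 (by positivity)
        _ = r := by field_simp [ne_of_gt hr0]
    linarith
  · -- nonvanishing witness on the circle
    refine ⟨eθ ε, by exact eθ_norm ε, ?_⟩
    have hz1 : eθ ε ≠ 1 := eθ_ne_one hε0 hεlt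
    have hznorm : ‖eθ ε‖ ≤ 1 := le_of_eq (eθ_norm ε)
    have hne : (1:ℂ) - (a:ℂ)*(eθ ε) ≠ 0 := hden_ne ha0 ha1 hznorm
    rw [ratval hne hz1]
    apply pow_ne_zero
    intro hg0
    have hdist : ‖eθ ε - 1‖ ≤ (1-a)/(32*(m:ℝ)) := by
      calc ‖eθ ε - 1‖ ≤ ε := eθ_dist_le ε (le_of_lt hε0) hε2π
        _ = (1-a)/(32*(m:ℝ)) := hε_def
    have hre := g_re ha0 ha1 hm hznorm hz1 hdist
    rw [hg0] at hre
    simp only [Complex.zero_re] at hre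
    have : 0 < (m:ℝ)/(2*(1-a)) := by positivity
    linarith
  · -- the Nikolskii ratio estimate
    set F : ℝ → ℂ := fun θ => (PP a m).eval (eθ θ) / (QQ a m).eval (eθ θ) with hF_def
    have hval : ∀ θ ∈ Set.Ioo 0 (2*π), F θ = (gg a m (eθ θ))^2 := by
      intro θ hθ
      exact ratval (hden_ne ha0 ha1 (le_of_eq (eθ_norm θ))) (eθ_ne_one hθ.1 hθ.2)
    have hb1 : ∀ θ ∈ Set.Ioo 0 (2*π), ‖F θ‖ ≤ 4*K^2 := by
      intro θ hθ
      rw [hval θ hθ, norm_pow]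
      have hgle := g_le ha0 ha1 hm (le_of_eq (eθ_norm θ)) (eθ_ne_one hθ.1 hθ.2)
      have h2K : 2*(m:ℝ)/(1-a) = 2*K := by rw [hK_def, mul_div_assoc]
      rw [h2K] at hgle
      nlinarith [norm_nonneg (gg a m (eθ θ))]
    have hb2 : ∀ θ ∈ Set.Ioo 0 (2*π), ‖F θ‖ ≤ π^2/(min θ (2*π-θ))^2 := by
      intro θ hθ
      rw [hval θ hθ, norm_pow]
      have hgle := g_le' (m := m) ha0 ha1 (le_of_eq (eθ_norm θ)) (eθ_ne_one hθ.1 hθ.2)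
      have hminpos : 0 < min θ (2*π - θ) := lt_min hθ.1 (by linarith [hθ.2])
      have hdist := eθ_dist_ge θ hθ.1 hθ.2
      have h1 : ‖gg a m (eθ θ)‖^2 ≤ (2/‖1 - eθ θ‖)^2 :=
        pow_le_pow_left₀ (norm_nonneg _) hgle 2
      apply le_trans h1
      have hnz : 0 < ‖1 - eθ θ‖ := lt_of_lt_of_le (by positivity) hdist
      rw [div_pow, div_le_div_iff₀ (by positivity) (by positivity)]
      have hsq : (2/π * min θ (2*π-θ))^2 ≤ ‖1 - eθ θ‖^2 :=
        pow_le_pow_left₀ (by positivity) hdist 2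
      calc (2:ℝ)^2 * (min θ (2*π-θ))^2 = ((2/π * min θ (2*π-θ))^2)*π^2 := by
            field_simp
        _ ≤ ‖1 - eθ θ‖^2 * π^2 := mul_le_mul_of_nonneg_right hsq (by positivity)
        _ = π^2*‖1 - eθ θ‖^2 := by ring
    have hlowpt : ∀ θ ∈ Set.Ioc 0 ε, K^2/4 ≤ ‖F θ‖ := by
      intro θ hθ
      have hθ2π : θ < 2*π := lt_of_le_of_lt hθ.2 hεlt
      have hmem : θ ∈ Set.Ioo 0 (2*π) := ⟨hθ.1, hθ2π⟩
      rw [hval θ hmem, norm_pow]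
      have hdist : ‖eθ θ - 1‖ ≤ (1-a)/(32*(m:ℝ)) := by
        calc ‖eθ θ - 1‖ ≤ θ := eθ_dist_le θ (le_of_lt hθ.1) (le_of_lt hθ2π)
          _ ≤ ε := hθ.2
          _ = (1-a)/(32*(m:ℝ)) := hε_def
      have hre := g_re ha0 ha1 hm (le_of_eq (eθ_norm θ)) (eθ_ne_one hθ.1 hθ2π) hdist
      have h2 : (m:ℝ)/(2*(1-a)) = K/2 := by
        rw [hK_def, div_div]
        congr 1
        ring
      rw [h2] at hre
      have hnorm : K/2 ≤ ‖gg a m (eθ θ)‖ := by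
        have h1 : (gg a m (eθ θ)).re ≤ ‖gg a m (eθ θ)‖ :=
          (abs_le.mp (Complex.abs_re_le_norm _)).2
        have h1' : ‖gg a m (eθ θ)‖ = ‖gg a m (eθ θ)‖ := rfl
        linarith
      nlinarith [norm_nonneg (gg a m (eθ θ))]
    have hbd_ae : ∀ᵐ θ ∂mT, ‖F θ‖ ≤ 4*K^2 := mT_ae_Ioo.mono (fun θ hθ => hb1 θ hθ)
    have hL1 := L1_bound F hK1 hb1 hb2
    have hupper := eLp_upper F hp0 hpt hp1' hbd_ae hL1
    have hv1 : 1/p.toReal ≤ 1 := by rw [div_le_one hp0']; exact hp1'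
    have hv0 : 0 < 1/p.toReal := by positivity
    have hupper2 : eLpNorm F p mT ≤ ENNReal.ofReal (20 * K^(2 - 1/p.toReal)) := by
      apply le_trans hupper
      rw [ENNReal.ofReal_rpow_of_pos (by positivity), ENNReal.ofReal_rpow_of_pos (by positivity),
        ← ENNReal.ofReal_mul (by positivity)]
      apply ENNReal.ofReal_le_ofReal
      have h4u : (4:ℝ)^(1 - 1/p.toReal) ≤ 4 := by
        calc (4:ℝ)^(1 - 1/p.toReal) ≤ (4:ℝ)^(1:ℝ) :=
              Real.rpow_le_rpow_of_exponent_le (by norm_num) (by linarith)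
          _ = 4 := Real.rpow_one 4
      have h5v : (5:ℝ)^(1/p.toReal) ≤ 5 := by
        calc (5:ℝ)^(1/p.toReal) ≤ (5:ℝ)^(1:ℝ) :=
              Real.rpow_le_rpow_of_exponent_le (by norm_num) hv1
          _ = 5 := Real.rpow_one 5
      calc (4*K^2)^(1 - 1/p.toReal) * (5*K)^(1/p.toReal)
          = (4:ℝ)^(1 - 1/p.toReal) * (K^2:ℝ)^(1 - 1/p.toReal)
              * ((5:ℝ)^(1/p.toReal) * K^(1/p.toReal)) := by
            rw [Real.mul_rpow (by norm_num) (by positivity),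
              Real.mul_rpow (by norm_num) (le_of_lt hK0)]
        _ ≤ 4 * (K^2:ℝ)^(1 - 1/p.toReal) * (5 * K^(1/p.toReal)) := by
            apply mul_le_mul
            · exact mul_le_mul_of_nonneg_right h4u (Real.rpow_nonneg (by positivity) _)
            · exact mul_le_mul_of_nonneg_right h5v (Real.rpow_nonneg (le_of_lt hK0) _)
            · positivity
            · positivity
        _ = 20 * ((K^2:ℝ)^(1 - 1/p.toReal) * K^(1/p.toReal)) := by ring
        _ = 20 * K^(2 - 1/p.toReal) := by
            rw [← Real.rpow_natCast K 2, ← Real.rpow_mul (le_of_lt hK0),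
              ← Real.rpow_add hK0]
            congr 2
            push_cast
            ring
    have hlower : ENNReal.ofReal (K^(2 - q.toReal⁻¹)/(256*π)) ≤ eLpNorm F q mT := by
      rcases eq_or_ne q ⊤ with hqtop | hqtop
      · subst hqtop
        apply le_trans ?_ (eLp_lower_top F hε0 hε2π hlowpt)
        apply ENNReal.ofReal_le_ofReal
        simp only [ENNReal.toReal_top, inv_zero, sub_zero]
        rw [Real.rpow_two]
        rw [div_le_div_iff₀ (by positivity) (by norm_num)]
        nlinarith [sq_nonneg K]
      · have hq1' : 1 ≤ q.toReal := by
          have := ENNReal.toReal_mono hqtop (hp.trans hpq.le)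
          simpa using this
        have hq0' : 0 < q.toReal := by linarith
        have h := eLp_lower F hq0 hqtop (c := K^2/4) (by positivity) hε0 hε2π hlowpt
        apply le_trans ?_ h
        rw [ENNReal.ofReal_rpow_of_pos (by positivity : 0 < ε/(2*π)),
          ← ENNReal.ofReal_mul (by positivity)]
        apply ENNReal.ofReal_le_ofReal
        have hw1 : 1/q.toReal ≤ 1 := by rw [div_le_one hq0']; exact hq1'
        have hsplit : ε/(2*π) = (1/(64*π)) * (1/K) := by
          rw [hεK]; field_simp; ring
        have hpow_pos : (0:ℝ) < K^(1/q.toReal) := Real.rpow_pos_of_pos hK0 _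
        have h64 : (1/(64*π)) ≤ (1/(64*π))^(1/q.toReal) := by
          calc (1/(64*π)) = (1/(64*π))^(1:ℝ) := (Real.rpow_one _).symm
            _ ≤ (1/(64*π))^(1/q.toReal) := by
                apply Real.rpow_le_rpow_of_exponent_ge (by positivity) ?_ hw1
                rw [div_le_one (by positivity)]
                nlinarith
        have hbase_eq : (ε/(2*π))^(1/q.toReal)
            = (1/(64*π))^(1/q.toReal) * (K^(1/q.toReal))⁻¹ := by
          rw [hsplit, Real.mul_rpow (by positivity) (by positivity), one_div K,
            Real.inv_rpow (le_of_lt hK0)]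
        have e1 : K^(2 - q.toReal⁻¹) = K^(2:ℝ) / K^(q.toReal⁻¹) := Real.rpow_sub hK0 2 _
        calc K^(2 - q.toReal⁻¹)/(256*π)
            = (K^2/4) * ((1/(64*π)) * (K^(1/q.toReal))⁻¹) := by
              rw [e1, Real.rpow_two, one_div q.toReal]
              field_simp
              ring
          _ ≤ (K^2/4) * ((1/(64*π))^(1/q.toReal) * (K^(1/q.toReal))⁻¹) := by
              apply mul_le_mul_of_nonneg_left
                (mul_le_mul_of_nonneg_right h64 (by positivity)) (by positivity)
          _ = (K^2/4) * (ε/(2*π))^(1/q.toReal) := by rw [hbase_eq]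
    -- assemble
    set α : ℝ := p.toReal⁻¹ - q.toReal⁻¹ with hα_def
    have hα0 : 0 ≤ α := by
      rcases eq_or_ne q ⊤ with hqtop | hqtop
      · subst hqtop
        simp only [hα_def, ENNReal.toReal_top, inv_zero, sub_zero]
        positivity
      · have hpq' : p.toReal ≤ q.toReal := ENNReal.toReal_mono hqtop hpq.le
        have : q.toReal⁻¹ ≤ p.toReal⁻¹ := by
          apply inv_anti₀ hp0' hpq'
        rw [hα_def]
        linarith
    have hα1 : α ≤ 1 := by
      rw [hα_def]
      have h1 : p.toReal⁻¹ ≤ 1 := by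
        rw [inv_le_one_iff₀]
        right
        exact hp1'
      have h2 : 0 ≤ q.toReal⁻¹ := by positivity
      linarith
    have h1r : (0:ℝ) < 1 - r := by linarith
    have hbase : (n:ℝ)/(1-r) ≤ 8*K := by
      rw [div_le_iff₀ h1r]
      have hKa : K * (1-a) = (m:ℝ) := by rw [hK_def]; field_simp
      have haf : 1 - a = (1-r)*(1+r) := by rw [ha_def]; ring
      have key : 8*K*((1-r)*(1+r)) = 8*(m:ℝ) := by rw [← haf]; linarith [hKa]
      nlinarith [mul_pos (by positivity : (0:ℝ) < 8*K) h1r]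
    have hX : ((n:ℝ)/(1-r))^α ≤ 8*K^α := by
      calc ((n:ℝ)/(1-r))^α ≤ (8*K)^α := Real.rpow_le_rpow (by positivity) hbase hα0
        _ = (8:ℝ)^α * K^α := Real.mul_rpow (by norm_num) (le_of_lt hK0)
        _ ≤ 8 * K^α := by
            apply mul_le_mul_of_nonneg_right ?_ (Real.rpow_nonneg (le_of_lt hK0) α)
            calc (8:ℝ)^α ≤ (8:ℝ)^(1:ℝ) := Real.rpow_le_rpow_of_exponent_le (by norm_num) hα1
              _ = 8 := Real.rpow_one 8
    have hCX : (40960*π)⁻¹ * ((n:ℝ)/(1-r))^α ≤ (40960*π)⁻¹ * (8*K^α) :=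
      mul_le_mul_of_nonneg_left hX (by positivity)
    calc ENNReal.ofReal ((40960*π)⁻¹ * ((n:ℝ)/(1-r))^α) * circLp (fun z => (PP a m).eval z / (QQ a m).eval z) p
        ≤ ENNReal.ofReal ((40960*π)⁻¹ * (8*K^α)) * ENNReal.ofReal (20 * K^(2 - 1/p.toReal)) :=
          mul_le_mul' (ENNReal.ofReal_le_ofReal hCX) hupper2
      _ = ENNReal.ofReal ((40960*π)⁻¹ * (8*K^α) * (20 * K^(2 - 1/p.toReal))) :=
          (ENNReal.ofReal_mul (by positivity)).symm
      _ = ENNReal.ofReal (K^(2 - q.toReal⁻¹)/(256*π)) := by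
          congr 1
          have hKK : K^α * K^(2-1/p.toReal) = K^(2 - q.toReal⁻¹) := by
            rw [← Real.rpow_add hK0]
            congr 1
            rw [hα_def, one_div]
            ring
          rw [show (40960*π:ℝ)⁻¹ * (8*K^α) * (20 * K^(2 - 1/p.toReal))
              = (K^α * K^(2-1/p.toReal))/(256*π) by field_simp; ring, hKK]
      _ ≤ circLp (fun z => (PP a m).eval z / (QQ a m).eval z) q := hlower
end
end

section
/- Let B = Π_{j=1}^{d} b_{ν_j} be a finite Blaschke product with ν_j ∈ 𝔻. Then for all u, ξ ∈ 𝕋, |k_ξ^B(u)|² ≤ ( Σ_{j=1}^{d} (1−|ν_j|²)/|1−conj(ν_j)ξ|² ) · ( Σ_{j=1}^{d} (1+|ν_j|)/(1−|ν_j|) ). -/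
open MeasureTheory Complex Polynomial ComplexConjugate
open scoped ENNReal Real

noncomputable section

/-- The elementary Blaschke factor `b_λ(z) = (λ−z)/(1−conj(λ)z)`. -/
def blas (l : ℂ) (z : ℂ) : ℂ := (l - z) / (1 - conj l * z)

/-- The reproducing kernel of the model space `K_B`:
`k_ξ^B(z) = (1 − conj(B(ξ)) B(z)) / (1 − conj(ξ) z)`. -/
def kern (B : ℂ → ℂ) (ξ z : ℂ) : ℂ :=
  (1 - conj (B ξ) * B z) / (1 - conj ξ * z)



lemma tele {ι : Type*} [DecidableEq ι] (s : Finset ι) (x : ι → ℂ) (h : ∀ i ∈ s, ‖x i‖ ≤ 1) :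
    ‖1 - ∏ i ∈ s, x i‖ ≤ ∑ i ∈ s, ‖1 - x i‖ := by
  induction s using Finset.induction_on with
  | empty => simp
  | insert a s' hns ih =>
    rw [Finset.prod_insert hns, Finset.sum_insert hns]
    have key : (1 : ℂ) - x a * ∏ i ∈ s', x i = (1 - x a) + x a * (1 - ∏ i ∈ s', x i) := by ring
    rw [key]
    calc ‖(1 - x a) + x a * (1 - ∏ i ∈ s', x i)‖
        ≤ ‖1 - x a‖ + ‖x a * (1 - ∏ i ∈ s', x i)‖ := norm_add_le _ _
      _ ≤ ‖1 - x a‖ + ∑ i ∈ s', ‖1 - x i‖ := by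
          gcongr
          rw [norm_mul]
          calc ‖x a‖ * ‖1 - ∏ i ∈ s', x i‖
              ≤ 1 * ‖1 - ∏ i ∈ s', x i‖ := by
                gcongr; exact h a (Finset.mem_insert_self a s')
            _ = ‖1 - ∏ i ∈ s', x i‖ := one_mul _
            _ ≤ _ := ih fun i hi => h i (Finset.mem_insert_of_mem hi)

lemma denom_ne (l z : ℂ) (hl : ‖l‖ < 1) (hz : ‖z‖ = 1) :
    (1 : ℂ) - conj l * z ≠ 0 := by
  intro hc
  have h1 : (1 : ℂ) = conj l * z := by linear_combination hc
  have : ‖l‖ = 1 := by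
    have := congrArg norm h1
    rwa [norm_mul, Complex.norm_conj, hz, mul_one, norm_one, eq_comm] at this
  linarith

lemma abs_blas (l z : ℂ) (hl : ‖l‖ < 1) (hz : ‖z‖ = 1) :
    ‖blas l z‖ = 1 := by
  have hzz : z * conj z = 1 := by
    rw [Complex.mul_conj, Complex.normSq_eq_norm_sq, hz]; norm_num
  have hnum : l - z = -(z * conj (1 - conj l * z)) := by
    simp only [map_sub, map_mul, map_one, Complex.conj_conj]
    linear_combination (-l) * hzz
  rw [blas, norm_div, hnum, norm_neg, norm_mul, Complex.norm_conj, hz, one_mul,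
    div_self]
  exact norm_ne_zero_iff.mpr (denom_ne l z hl hz)

lemma single_num (l ξ u : ℂ) (hl : ‖l‖ < 1) (hξ : ‖ξ‖ = 1)
    (hu : ‖u‖ = 1) :
    1 - conj (blas l ξ) * blas l u =
      ((1 - (‖l‖ : ℂ) ^ 2) * (1 - conj ξ * u)) /
        ((1 - l * conj ξ) * (1 - conj l * u)) := by
  have h1 : (1 : ℂ) - conj l * ξ ≠ 0 := denom_ne l ξ hl hξ
  have h2 : (1 : ℂ) - conj l * u ≠ 0 := denom_ne l u hl hu
  have h1' : (1 : ℂ) - l * conj ξ ≠ 0 := by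
    intro hc; apply h1
    have := congrArg (starRingEnd ℂ) hc
    simpa [map_sub, map_mul] using this
  have habs : (‖l‖ : ℂ) ^ 2 = conj l * l := by
    rw [← Complex.normSq_eq_conj_mul_self]
    norm_cast
    exact Complex.sq_norm l
  rw [blas, blas, map_div₀, map_sub, map_sub, map_mul, map_one, Complex.conj_conj, habs]
  rw [div_mul_div_comm, one_sub_div (mul_ne_zero h1' h2), div_left_inj' (mul_ne_zero h1' h2)]
  ring

/-- inequality \eqref{CS1}.
For a finite Blaschke product `B = Π_{j=1}^d b_{ν_j}` with `ν_j ∈ 𝔻` and `u, ξ ∈ 𝕋`,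
`|k_ξ^B(u)|² ≤ (Σ_j (1−|ν_j|²)/|1−conj(ν_j)ξ|²)(Σ_j (1+|ν_j|)/(1−|ν_j|))`. -/
theorem stmt_16 (d : ℕ) (ν : Fin d → ℂ) (hν : ∀ j, ‖ν j‖ < 1)
    (B : ℂ → ℂ) (hB : B = fun z => ∏ j, blas (ν j) z)
    (u ξ : ℂ) (hu : ‖u‖ = 1) (hξ : ‖ξ‖ = 1) :
    ‖kern B ξ u‖ ^ 2 ≤
      (∑ j, (1 - ‖ν j‖ ^ 2) / ‖1 - conj (ν j) * ξ‖ ^ 2) *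
        ∑ j, (1 + ‖ν j‖) / (1 - ‖ν j‖) := by
  have hRHS1 : 0 ≤ ∑ j, (1 - ‖ν j‖ ^ 2) / ‖1 - conj (ν j) * ξ‖ ^ 2 := by
    apply Finset.sum_nonneg
    intro j _
    apply div_nonneg
    · nlinarith [hν j, norm_nonneg (ν j)]
    · positivity
  have hRHS2 : 0 ≤ ∑ j, (1 + ‖ν j‖) / (1 - ‖ν j‖) := by
    apply Finset.sum_nonneg
    intro j _
    apply div_nonneg
    · nlinarith [norm_nonneg (ν j)]
    · linarith [hν j]
  by_cases hD : (1 : ℂ) - conj ξ * u = 0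
  · rw [kern, hD, div_zero, norm_zero]
    simpa using mul_nonneg hRHS1 hRHS2
  -- main case
  have hDpos : 0 < ‖1 - conj ξ * u‖ := norm_pos_iff.mpr hD
  set D := ‖1 - conj ξ * u‖ with hDdef
  -- Step 1: |kern B ξ u| ≤ ∑ j, |kern (blas ν_j) ξ u|
  have step1 : ‖kern B ξ u‖ ≤
      ∑ j, (1 - ‖ν j‖ ^ 2) /
        (‖1 - conj (ν j) * ξ‖ * ‖1 - conj (ν j) * u‖) := by
    rw [kern, hB, norm_div]
    simp only
    rw [map_prod]
    have := tele Finset.univ (fun j => conj (blas (ν j) ξ) * blas (ν j) u)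
      (fun j _ => by
        rw [norm_mul, Complex.norm_conj, abs_blas _ _ (hν j) hξ, abs_blas _ _ (hν j) hu]
        norm_num)
    rw [← Finset.prod_mul_distrib]
    calc ‖1 - ∏ j, conj (blas (ν j) ξ) * blas (ν j) u‖ / D
        ≤ (∑ j, ‖1 - conj (blas (ν j) ξ) * blas (ν j) u‖) / D := by
          apply div_le_div_of_nonneg_right ?_ hDpos.le
          · simpa using this
      _ = ∑ j, ‖1 - conj (blas (ν j) ξ) * blas (ν j) u‖ / D :=
          Finset.sum_div _ _ _
      _ = _ := by
          apply Finset.sum_congr rfl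
          intro j _
          rw [single_num _ _ _ (hν j) hξ hu, norm_div, norm_mul, norm_mul]
          have hA : ‖(1 : ℂ) - (‖ν j‖ : ℂ) ^ 2‖ =
              1 - ‖ν j‖ ^ 2 := by
            have : ((1 : ℂ) - (‖ν j‖ : ℂ) ^ 2) =
                ((1 - ‖ν j‖ ^ 2 : ℝ) : ℂ) := by push_cast; ring
            rw [this, Complex.norm_real, Real.norm_eq_abs, _root_.abs_of_nonneg]
            nlinarith [hν j, norm_nonneg (ν j)]
          have hB' : ‖1 - ν j * conj ξ‖ = ‖1 - conj (ν j) * ξ‖ := by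
            rw [← Complex.norm_conj (1 - ν j * conj ξ)]
            simp [map_sub, map_mul]
          rw [hA, hB', ← hDdef, div_div, mul_div_mul_right _ _ (ne_of_gt hDpos)]
  -- Step 2: Cauchy–Schwarz
  set f : Fin d → ℝ := fun j => Real.sqrt (1 - ‖ν j‖ ^ 2) /
    ‖1 - conj (ν j) * ξ‖
  set g : Fin d → ℝ := fun j => Real.sqrt (1 - ‖ν j‖ ^ 2) /
    ‖1 - conj (ν j) * u‖
  have h1mabs : ∀ j : Fin d, (0:ℝ) ≤ 1 - ‖ν j‖ ^ 2 := by
    intro j; nlinarith [hν j, norm_nonneg (ν j)]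
  have hfg : ∀ j : Fin d, f j * g j = (1 - ‖ν j‖ ^ 2) /
      (‖1 - conj (ν j) * ξ‖ * ‖1 - conj (ν j) * u‖) := by
    intro j
    simp only [f, g]
    rw [div_mul_div_comm, Real.mul_self_sqrt (h1mabs j)]
  have hf2 : ∀ j : Fin d, f j ^ 2 = (1 - ‖ν j‖ ^ 2) /
      ‖1 - conj (ν j) * ξ‖ ^ 2 := by
    intro j
    simp only [f, div_pow, Real.sq_sqrt (h1mabs j)]
  have hg2 : ∀ j : Fin d, g j ^ 2 = (1 - ‖ν j‖ ^ 2) /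
      ‖1 - conj (ν j) * u‖ ^ 2 := by
    intro j
    simp only [g, div_pow, Real.sq_sqrt (h1mabs j)]
  have cs := Finset.sum_mul_sq_le_sq_mul_sq Finset.univ f g
  have step3 : ∑ j, g j ^ 2 ≤ ∑ j, (1 + ‖ν j‖) / (1 - ‖ν j‖) := by
    apply Finset.sum_le_sum
    intro j _
    rw [hg2 j]
    have hden : 1 - ‖ν j‖ ≤ ‖1 - conj (ν j) * u‖ := by
      have h1 : ‖conj (ν j) * u‖ = ‖ν j‖ := by
        rw [norm_mul, Complex.norm_conj, hu, mul_one]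
      have hnrm := norm_sub_norm_le (1 : ℂ) (conj (ν j) * u)
      simp only [norm_one] at hnrm
      rw [h1] at hnrm
      linarith
    have hpos : (0:ℝ) < 1 - ‖ν j‖ := by linarith [hν j]
    have hfac : 1 - ‖ν j‖ ^ 2 =
        (1 - ‖ν j‖) * (1 + ‖ν j‖) := by ring
    rw [hfac]
    rw [div_le_div_iff₀ (pow_pos (norm_pos_iff.mpr (denom_ne _ _ (hν j) hu)) 2) hpos]
    have h2 : (1 - ‖ν j‖) ^ 2 ≤ ‖1 - conj (ν j) * u‖ ^ 2 := by
      apply pow_le_pow_left₀ (le_of_lt hpos) hden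
    nlinarith [norm_nonneg (ν j), norm_nonneg (1 - conj (ν j) * u)]
  calc ‖kern B ξ u‖ ^ 2
      ≤ (∑ j, f j * g j) ^ 2 := by
        apply pow_le_pow_left₀ (norm_nonneg _)
        rw [show ∑ j, f j * g j = ∑ j, (1 - ‖ν j‖ ^ 2) /
          (‖1 - conj (ν j) * ξ‖ * ‖1 - conj (ν j) * u‖) from
          Finset.sum_congr rfl fun j _ => hfg j]
        exact step1
    _ ≤ (∑ j, f j ^ 2) * ∑ j, g j ^ 2 := cs
    _ ≤ (∑ j, (1 - ‖ν j‖ ^ 2) / ‖1 - conj (ν j) * ξ‖ ^ 2) *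
        ∑ j, (1 + ‖ν j‖) / (1 - ‖ν j‖) := by
        rw [show ∑ j, f j ^ 2 = ∑ j, (1 - ‖ν j‖ ^ 2) /
          ‖1 - conj (ν j) * ξ‖ ^ 2 from Finset.sum_congr rfl fun j _ => hf2 j]
        apply mul_le_mul_of_nonneg_left step3 hRHS1
end
end

section
/- Let 1 < p ≤ ∞. There exists a constant c(p) > 0 such that for every integer n ≥ 2, every r ∈ (0,1), the function f(z) = b'_{−r}(z) · Σ_{k=0}^{n−2} b_{−r}(z)^k satisfies ‖f‖_{L^p(𝕋,m)} ≤ c(p) · ( n/(1−r) )^{1−1/p}. -/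
open MeasureTheory Complex Polynomial ComplexConjugate
open scoped ENNReal Real

noncomputable section

/-- The elementary Blaschke factor associated to `−r`: `b_{−r}(z) = (z+r)/(1+rz)`. -/
def bm (r : ℝ) (z : ℂ) : ℂ := (z + (r : ℂ)) / (1 + (r : ℂ) * z)


lemma sqle {a b : ℝ} (ha : 0 ≤ a) (hb : 0 ≤ b) (h : a ^ 2 ≤ b ^ 2) : a ≤ b := by
  nlinarith

lemma auxhF7 {δ s u m n w t X : ℝ} (hδ : 0 < δ) (hs : 0 ≤ s) (hm : 0 ≤ m) (hu : 0 ≤ u)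
    (hn : 0 < n) (ha : (δ + u) / 3 * (m / 2) ≤ w * t) (hb : (δ + u) / (9 * n) ≤ X)
    (hc : s / 2 ≤ u) : (δ + s) * (m + 1 / n) / 18 ≤ w * t + X := by
  have hc' : (δ + s) / 2 ≤ δ + u := by linarith
  have h₁ : (δ + s) / 2 * m ≤ (δ + u) * m := mul_le_mul_of_nonneg_right hc' hm
  have h₂ : (δ + s) / 2 * (1 / n) ≤ (δ + u) * (1 / n) :=
    mul_le_mul_of_nonneg_right hc' (one_div_nonneg.mpr hn.le)
  have h₃ : (δ + u) * (1 / n) / 9 = (δ + u) / (9 * n) := by rw [mul_one_div, div_div, mul_comm n 9]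
  linarith [h₁, h₂, ha, hb, mul_nonneg (add_nonneg hδ.le hu) hm]

lemma auxhb {δ u w n : ℝ} (hδ : 0 < δ) (hu : 0 ≤ u) (hn : 0 < n)
    (h1 : ((δ + u) / 3) ^ 2 ≤ w ^ 2) : (δ + u) / (9 * n) ≤ w ^ 2 / (δ * n) := by
  rw [div_le_div_iff₀ (by positivity) (by positivity)]
  linarith [mul_le_mul_of_nonneg_right h1 hn.le,
    mul_nonneg (mul_nonneg hn.le hu) (add_nonneg hδ.le hu)]

set_option maxHeartbeats 8000000 in
lemma ptwise (n : ℕ) (hn : 2 ≤ n) (r : ℝ) (hr0 : 0 < r) (hr1 : r < 1)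
    (θ : ℝ) (hθ : θ ∈ Set.Ioc 0 (2 * Real.pi)) :
    ‖deriv (bm r) (eθ θ) * ∑ k ∈ Finset.range (n - 1), bm r (eθ θ) ^ k‖ ≤
      144 / (min θ (2 * Real.pi - θ) + 1 / n) + 144 / ((1 - r) + |θ - Real.pi|) := by
  have hπ := Real.pi_gt_three
  set z : ℂ := eθ θ with hzdef
  have hz : ‖z‖ = 1 := by
    simp [hzdef, eθ, Complex.norm_exp_ofReal_mul_I]
  have hre : z.re = Real.cos θ := Complex.exp_ofReal_mul_I_re θ
  have him : z.im = Real.sin θ := Complex.exp_ofReal_mul_I_im θ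
  set δ : ℝ := 1 - r with hδdef
  have hδ : 0 < δ := by simp [hδdef]; linarith
  have hδ1 : δ ≤ 1 := by simp [hδdef]; linarith
  have hden : (1 : ℂ) + (r : ℂ) * z ≠ 0 := by
    intro h
    have : ‖(r : ℂ) * z‖ = r := by
      simp [norm_mul, hz, Complex.norm_real, abs_of_pos hr0]
    have h2 : (r : ℂ) * z = -1 := by linear_combination h
    rw [h2] at this
    simp at this
    linarith
  set w₀ : ℝ := ‖(1 : ℂ) + (r : ℂ) * z‖ with hw₀def
  have hw₀pos : 0 < w₀ := norm_pos_iff.mpr hden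
  -- |b| = 1
  have habs_num : ‖z + (r : ℂ)‖ = w₀ := by
    have : z + (r : ℂ) = z * ((1 : ℂ) + (r : ℂ) * (starRingEnd ℂ) z) := by
      have hzz : z * (starRingEnd ℂ) z = 1 := by
        rw [Complex.mul_conj]
        norm_cast
        rw [← Complex.sq_norm]
        simp [hz]
      linear_combination (-(r : ℂ)) * hzz
    rw [this, norm_mul, hz, one_mul]
    have : (1 : ℂ) + (r : ℂ) * (starRingEnd ℂ) z = (starRingEnd ℂ) ((1 : ℂ) + (r : ℂ) * z) := by
      simp [map_add, map_mul, Complex.conj_ofReal]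
    rw [this, RCLike.norm_conj]
  have habs_b : ‖bm r z‖ = 1 := by
    rw [bm, norm_div, habs_num, div_self hw₀pos.ne']
  -- derivative
  have hderiv : deriv (bm r) z = ((1 : ℂ) - (r : ℂ) ^ 2) / ((1 : ℂ) + (r : ℂ) * z) ^ 2 := by
    have h1 : HasDerivAt (fun w : ℂ => w + (r : ℂ)) 1 z := (hasDerivAt_id z).add_const _
    have h2 : HasDerivAt (fun w : ℂ => (1 : ℂ) + (r : ℂ) * w) (r : ℂ) z := by
      simpa using ((hasDerivAt_id z).const_mul (r : ℂ)).const_add 1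
    have h := h1.div h2 hden
    have : deriv (bm r) z = (1 * ((1 : ℂ) + (r : ℂ) * z) - (z + (r : ℂ)) * (r : ℂ)) /
        ((1 : ℂ) + (r : ℂ) * z) ^ 2 := by
      apply HasDerivAt.deriv
      exact h
    rw [this]
    congr 1
    ring
  have hnd : ‖deriv (bm r) z‖ ≤ 2 * δ / w₀ ^ 2 := by
    rw [hderiv, norm_div, norm_pow]
    have h1 : ‖(1 : ℂ) - (r : ℂ) ^ 2‖ = 1 - r ^ 2 := by
      have : (1 : ℂ) - (r : ℂ) ^ 2 = ((1 - r ^ 2 : ℝ) : ℂ) := by push_cast; ring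
      rw [this, Complex.norm_real, Real.norm_of_nonneg (by nlinarith)]
    rw [h1, ← hw₀def]
    gcongr
    nlinarith
  -- norm of the sum, crude bound
  have hsum1 : ‖∑ k ∈ Finset.range (n - 1), bm r z ^ k‖ ≤ (n : ℝ) := by
    calc ‖∑ k ∈ Finset.range (n - 1), bm r z ^ k‖
        ≤ ∑ k ∈ Finset.range (n - 1), ‖bm r z ^ k‖ := norm_sum_le _ _
      _ = ∑ k ∈ Finset.range (n - 1), 1 := by
          apply Finset.sum_congr rfl; intro k _; rw [norm_pow, habs_b, one_pow]
      _ ≤ (n : ℝ) := by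
          rw [Finset.sum_const, Finset.card_range]
          simp only [nsmul_eq_mul, mul_one]
          exact_mod_cast Nat.cast_le.mpr (Nat.sub_le n 1)
  -- 1 - b
  set t : ℝ := ‖(1 : ℂ) - z‖ with htdef
  have h1mb : (1 : ℂ) - bm r z = ((δ : ℝ) : ℂ) * ((1 : ℂ) - z) / ((1 : ℂ) + (r : ℂ) * z) := by
    rw [bm, hδdef, eq_div_iff hden, sub_mul, div_mul_cancel₀ _ hden]
    push_cast
    ring
  have habs1mb : ‖(1 : ℂ) - bm r z‖ = δ * t / w₀ := by
    rw [h1mb, norm_div, norm_mul, Complex.norm_real, Real.norm_of_nonneg hδ.le, ← hw₀def, htdef]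
  -- fine bound when z ≠ 1
  have hfine : z ≠ 1 → ‖∑ k ∈ Finset.range (n - 1), bm r z ^ k‖ ≤ 2 * w₀ / (δ * t) := by
    intro hz1
    have ht0 : 0 < t := by
      rw [htdef, norm_pos_iff, sub_ne_zero]; exact fun h => hz1 h.symm
    have hb1 : bm r z ≠ 1 := by
      intro h
      have h0 : (1 : ℂ) - bm r z = 0 := by rw [h]; ring
      rw [h1mb] at h0
      rcases div_eq_zero_iff.mp h0 with h' | h'
      · rcases mul_eq_zero.mp h' with h'' | h''
        · exact hδ.ne' (by exact_mod_cast h'')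
        · exact hz1 (by linear_combination -h'')
      · exact hden h'
    rw [geom_sum_eq hb1, norm_div]
    have hnum : ‖bm r z ^ (n - 1) - 1‖ ≤ 2 := by
      calc ‖bm r z ^ (n - 1) - 1‖ ≤ ‖bm r z ^ (n - 1)‖ + ‖(1 : ℂ)‖ := norm_sub_le _ _
        _ ≤ 2 := by rw [norm_pow, habs_b, one_pow, norm_one]; norm_num
    have hdenom : ‖bm r z - 1‖ = δ * t / w₀ := by
      rw [← habs1mb, ← norm_neg]; congr 1; ring
    rw [hdenom]
    have he : 2 * w₀ / (δ * t) = 2 / (δ * t / w₀) := by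
      field_simp
    rw [he]
    gcongr
  -- geometric quantities
  set m : ℝ := min θ (2 * Real.pi - θ) with hmdef
  set s : ℝ := |θ - Real.pi| with hsdef
  set u : ℝ := ‖(1 : ℂ) + z‖ with hudef
  have hθ0 : 0 < θ := hθ.1
  have hθ2π : θ ≤ 2 * Real.pi := hθ.2
  have hm0 : 0 ≤ m := le_min hθ0.le (by linarith)
  have hms : m + s = Real.pi := by
    rcases le_total θ Real.pi with h | h
    · rw [hmdef, hsdef, min_eq_left (by linarith), _root_.abs_of_nonpos (by linarith)]; ring
    · rw [hmdef, hsdef, min_eq_right (by linarith), _root_.abs_of_nonneg (by linarith)]; ring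
  have hs0 : 0 ≤ s := abs_nonneg _
  -- t ≥ m/2
  have hpyth := Real.sin_sq_add_cos_sq θ
  have htsq : t ^ 2 = 2 - 2 * Real.cos θ := by
    rw [htdef, Complex.sq_norm, Complex.normSq_apply]
    simp only [Complex.sub_re, Complex.sub_im, Complex.one_re, Complex.one_im, hre, him]
    nlinarith [hpyth]
  have husq : u ^ 2 = 2 + 2 * Real.cos θ := by
    rw [hudef, Complex.sq_norm, Complex.normSq_apply]
    simp only [Complex.add_re, Complex.add_im, Complex.one_re, Complex.one_im, hre, him]
    nlinarith [hpyth]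
  have htm : m / 2 ≤ t := by
    have ht0 : 0 ≤ t := norm_nonneg _
    rcases le_total θ Real.pi with h | h
    · have hcos : Real.cos θ ≤ 1 - 2 / Real.pi ^ 2 * θ ^ 2 :=
        Real.cos_le_one_sub_mul_cos_sq (by rw [_root_.abs_of_nonneg hθ0.le]; exact h)
      have hmθ : m ≤ θ := min_le_left _ _
      have hπ0 : (0:ℝ) < Real.pi ^ 2 := by positivity
      have hdiv : (1:ℝ)/8 ≤ 2 / Real.pi ^ 2 := by
        rw [div_le_div_iff₀ (by norm_num) hπ0]; nlinarith [Real.pi_le_four]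
      have h1 : θ ^ 2 / 4 ≤ t ^ 2 := by
        linarith [mul_le_mul_of_nonneg_right hdiv (sq_nonneg θ)]
      have h2 : (m/2) ^ 2 ≤ t ^ 2 := by
        nlinarith [mul_self_le_mul_self hm0 hmθ]
      exact sqle (by positivity) ht0 h2
    · have hcos : Real.cos (2 * Real.pi - θ) ≤ 1 - 2 / Real.pi ^ 2 * (2 * Real.pi - θ) ^ 2 :=
        Real.cos_le_one_sub_mul_cos_sq (by rw [_root_.abs_of_nonneg (by linarith)]; linarith)
      rw [Real.cos_two_pi_sub] at hcos
      have hmθ : m ≤ 2 * Real.pi - θ := min_le_right _ _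
      have hπ0 : (0:ℝ) < Real.pi ^ 2 := by positivity
      have hdiv : (1:ℝ)/8 ≤ 2 / Real.pi ^ 2 := by
        rw [div_le_div_iff₀ (by norm_num) hπ0]; nlinarith [Real.pi_le_four]
      have h1 : (2 * Real.pi - θ) ^ 2 / 4 ≤ t ^ 2 := by
        linarith [mul_le_mul_of_nonneg_right hdiv (sq_nonneg (2 * Real.pi - θ))]
      have h2 : (m/2) ^ 2 ≤ t ^ 2 := by
        nlinarith [mul_self_le_mul_self hm0 hmθ]
      exact sqle (by positivity) ht0 h2
  -- u ≥ s/2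
  have hus : s / 2 ≤ u := by
    have hu0 : 0 ≤ u := norm_nonneg _
    have hcos : Real.cos (θ - Real.pi) ≤ 1 - 2 / Real.pi ^ 2 * (θ - Real.pi) ^ 2 := by
      apply Real.cos_le_one_sub_mul_cos_sq
      rw [abs_le]; constructor <;> linarith
    rw [Real.cos_sub_pi] at hcos
    have hπ0 : (0:ℝ) < Real.pi ^ 2 := by positivity
    have hdiv : (1:ℝ)/8 ≤ 2 / Real.pi ^ 2 := by
      rw [div_le_div_iff₀ (by norm_num) hπ0]; nlinarith [Real.pi_le_four]
    have hs2 : s ^ 2 = (θ - Real.pi) ^ 2 := _root_.sq_abs _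
    have h1 : (θ - Real.pi) ^ 2 / 4 ≤ u ^ 2 := by
      linarith [mul_le_mul_of_nonneg_right hdiv (sq_nonneg (θ - Real.pi))]
    have h2 : (s/2) ^ 2 ≤ u ^ 2 := by
      have he : (s/2) ^ 2 = (θ - Real.pi) ^ 2 / 4 := by rw [div_pow, hs2]; norm_num
      linarith
    exact sqle (by positivity) hu0 h2
  -- w₀ ≥ (δ+u)/3
  have hw₀l : (δ + u) / 3 ≤ w₀ := by
    have hrz : ‖(r : ℂ) * z‖ = r := by
      rw [norm_mul, hz, Complex.norm_real, Real.norm_of_nonneg hr0.le, mul_one]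
    have h1 : δ ≤ w₀ := by
      have h := norm_sub_norm_le (1 : ℂ) (-((r : ℂ) * z))
      simp only [norm_neg, sub_neg_eq_add, norm_one] at h
      rw [hrz] at h
      rw [hw₀def]; linarith
    have h2 : u - δ ≤ w₀ := by
      have he : ((1 : ℂ) + z) - ((1 : ℂ) + (r : ℂ) * z) = ((δ : ℝ) : ℂ) * z := by
        rw [hδdef]; push_cast; ring
      have h := norm_sub_norm_le ((1 : ℂ) + z) ((1 : ℂ) + (r : ℂ) * z)
      rw [he, norm_mul, hz, Complex.norm_real, Real.norm_of_nonneg hδ.le, mul_one] at h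
      rw [hw₀def, hudef]; linarith [h]
    linarith
    -- numeric facts about n
  have hn2 : (2:ℝ) ≤ (n:ℝ) := by exact_mod_cast hn
  have hnpos : (0:ℝ) < (n:ℝ) := by linarith
  have hε : (0:ℝ) < 1 / (n:ℝ) := by positivity
  have hu0 : (0:ℝ) ≤ u := norm_nonneg _
  have ht0' : (0:ℝ) ≤ t := norm_nonneg _
  -- F4 : crude bound
  have hF4 : ‖deriv (bm r) z * ∑ k ∈ Finset.range (n - 1), bm r z ^ k‖ ≤ 2 * δ * n / w₀ ^ 2 := by
    rw [norm_mul]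
    calc ‖deriv (bm r) z‖ * ‖∑ k ∈ Finset.range (n - 1), bm r z ^ k‖
        ≤ (2 * δ / w₀ ^ 2) * n := mul_le_mul hnd hsum1 (norm_nonneg _) (by positivity)
      _ = 2 * δ * n / w₀ ^ 2 := by ring
  -- F5 : fine bound
  have hF5 : z ≠ 1 → ‖deriv (bm r) z * ∑ k ∈ Finset.range (n - 1), bm r z ^ k‖ ≤ 4 / (t * w₀) := by
    intro hz1
    have ht0 : 0 < t := by
      rw [htdef, norm_pos_iff, sub_ne_zero]; exact fun h => hz1 h.symm
    rw [norm_mul]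
    calc ‖deriv (bm r) z‖ * ‖∑ k ∈ Finset.range (n - 1), bm r z ^ k‖
        ≤ (2 * δ / w₀ ^ 2) * (2 * w₀ / (δ * t)) :=
          mul_le_mul hnd (hfine hz1) (norm_nonneg _) (by positivity)
      _ = 4 / (t * w₀) := by field_simp; ring
  -- F6 : combined bound
  have hApos : 0 < w₀ * t + w₀ ^ 2 / (δ * n) :=
    add_pos_of_nonneg_of_pos (mul_nonneg hw₀pos.le ht0') (by positivity)
  have hF6 : ‖deriv (bm r) z * ∑ k ∈ Finset.range (n - 1), bm r z ^ k‖ ≤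
      8 / (w₀ * t + w₀ ^ 2 / (δ * n)) := by
    rcases le_or_gt (w₀ * t) (w₀ ^ 2 / (δ * n)) with h | h
    · refine hF4.trans ?_
      rw [div_le_div_iff₀ (by positivity) hApos]
      have e1 : 2 * δ * n * (w₀ ^ 2 / (δ * n)) = 2 * w₀ ^ 2 := by field_simp
      have e2 : 2 * δ * n * (w₀ * t) ≤ 2 * δ * n * (w₀ ^ 2 / (δ * n)) :=
        mul_le_mul_of_nonneg_left h (by positivity)
      linarith [e1, e2, sq_nonneg w₀]
    · have ht0 : 0 < t := by
        rcases lt_or_eq_of_le ht0' with h' | h'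
        · exact h'
        · exfalso; rw [← h', mul_zero] at h
          exact absurd h (not_lt.mpr (by positivity))
      have hz1 : z ≠ 1 := by
        intro hzz
        rw [htdef, hzz] at ht0
        simp at ht0
      refine (hF5 hz1).trans ?_
      rw [div_le_div_iff₀ (by positivity) hApos]
      linarith [h]
  -- F7 : denominator lower bound
  have hF7 : (δ + s) * (m + 1 / n) / 18 ≤ w₀ * t + w₀ ^ 2 / (δ * n) := by
    have ha : (δ + u) / 3 * (m / 2) ≤ w₀ * t :=
      mul_le_mul hw₀l htm (by positivity) (le_trans (by positivity) hw₀l)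
    have hb : (δ + u) / (9 * (n:ℝ)) ≤ w₀ ^ 2 / (δ * n) := by
      have h1 : ((δ + u) / 3) ^ 2 ≤ w₀ ^ 2 := by
        apply pow_le_pow_left₀ (by positivity) hw₀l
      exact auxhb hδ hu0 hnpos h1
    exact auxhF7 hδ hs0 hm0 hu0 hnpos ha hb hus
  -- main bound
  have hBpos : 0 < (δ + s) * (m + 1 / n) :=
    mul_pos (by linarith) (by linarith)
  have hmain : ‖deriv (bm r) z * ∑ k ∈ Finset.range (n - 1), bm r z ^ k‖ ≤
      144 / ((δ + s) * (m + 1 / n)) := by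
    refine hF6.trans ?_
    rw [div_le_div_iff₀ hApos hBpos]
    linarith [hF7]
  -- split
  have hmpos : 0 < m + 1 / n := by linarith
  have hspos : 0 < δ + s := by linarith
  rcases le_total m s with h | h
  · have hs1 : 1 ≤ δ + s := by linarith
    have t1 : 144 / ((δ + s) * (m + 1 / n)) ≤ 144 / (m + 1 / n) := by
      rw [div_le_div_iff₀ hBpos hmpos]
      linarith [mul_nonneg (sub_nonneg.mpr hs1) hmpos.le]
    have t2 : 0 ≤ 144 / (δ + s) := le_of_lt (div_pos (by norm_num) hspos)
    linarith
  · have hm1 : 1 ≤ m + 1 / n := by linarith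
    have t1 : 144 / ((δ + s) * (m + 1 / n)) ≤ 144 / (δ + s) := by
      rw [div_le_div_iff₀ hBpos hspos]
      linarith [mul_nonneg (sub_nonneg.mpr hm1) hspos.le]
    have t2 : 0 ≤ 144 / (m + 1 / n) := le_of_lt (div_pos (by norm_num) hmpos)
    linarith

lemma one_piece {q κ C L : ℝ} (hq : 1 < q) (hκ : 0 < κ) (hC : 0 ≤ C) (hL : 0 ≤ L) :
    ∫ y in κ..(κ + L), (C / y) ^ q ≤ C ^ q * κ ^ (1 - q) / (q - 1) := by
  have h0 : (0:ℝ) ∉ Set.uIcc κ (κ + L) := by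
    rw [Set.mem_uIcc]
    push_neg
    constructor <;> intro h <;> [linarith; linarith]
  have hcongr : ∫ y in κ..(κ + L), (C / y) ^ q = ∫ y in κ..(κ + L), C ^ q * y ^ (-q) := by
    apply intervalIntegral.integral_congr
    intro y hy
    rw [Set.uIcc_of_le (by linarith)] at hy
    have hy0 : 0 < y := lt_of_lt_of_le hκ hy.1
    show (C / y) ^ q = C ^ q * y ^ (-q)
    rw [Real.div_rpow hC hy0.le, Real.rpow_neg hy0.le, div_eq_mul_inv]
  rw [hcongr, intervalIntegral.integral_const_mul]
  have hrpow : ∫ y in κ..(κ + L), y ^ (-q) = ((κ + L) ^ (-q + 1) - κ ^ (-q + 1)) / (-q + 1) :=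
    integral_rpow (Or.inr ⟨by linarith, h0⟩)
  rw [hrpow]
  have h1 : (0:ℝ) ≤ (κ + L) ^ (-q + 1) := Real.rpow_nonneg (by linarith) _
  have h2 : ((κ + L) ^ (-q + 1) - κ ^ (-q + 1)) / (-q + 1) =
      (κ ^ (-q + 1) - (κ + L) ^ (-q + 1)) / (q - 1) := by
    rw [div_eq_div_iff (by linarith) (by linarith)]
    ring
  rw [h2, show (1:ℝ) - q = -q + 1 from by ring, mul_div_assoc]
  have h4 : (κ ^ (-q + 1) - (κ + L) ^ (-q + 1)) / (q - 1) ≤ κ ^ (-q + 1) / (q - 1) := by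
    rw [div_le_div_iff_of_pos_right (by linarith)]
    linarith
  exact mul_le_mul_of_nonneg_left h4 (Real.rpow_nonneg hC q)

lemma key_int {q κ C : ℝ} (hq : 1 < q) (hκ : 0 < κ) (hC : 0 ≤ C) (γ a b : ℝ) :
    ∫⁻ θ in Set.Ioc a b, ENNReal.ofReal ((C / (κ + |θ - γ|)) ^ q) ≤
      ENNReal.ofReal (2 * (C ^ q * κ ^ (1 - q) / (q - 1))) := by
  have hq0 : (0:ℝ) ≤ q := by linarith
  set F : ℝ → ℝ := fun x => (C / (κ + |x - γ|)) ^ q with hF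
  have hbase : Continuous fun x : ℝ => C / (κ + |x - γ|) := by
    apply continuous_const.div
    · continuity
    · intro x
      have : 0 ≤ |x - γ| := abs_nonneg _
      positivity
  have hcont : Continuous F := by
    apply hbase.rpow_const
    intro x; right; exact hq0
  have hnn : ∀ x, 0 ≤ F x := fun x => Real.rpow_nonneg (by positivity) q
  set L : ℝ := max |a - γ| |b - γ| with hLdef
  have hL : 0 ≤ L := le_trans (abs_nonneg _) (le_max_left _ _)
  have hsub : Set.Ioc a b ⊆ Set.Ioc (γ - L) (γ + L) := by
    intro x hx
    constructor
    · have h1 : γ - L ≤ a := by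
        have := neg_abs_le (a - γ)
        have h2 : |a - γ| ≤ L := le_max_left _ _
        linarith
      linarith [hx.1]
    · have h1 : b ≤ γ + L := by
        have := le_abs_self (b - γ)
        have h2 : |b - γ| ≤ L := le_max_right _ _
        linarith
      linarith [hx.2]
  calc ∫⁻ θ in Set.Ioc a b, ENNReal.ofReal (F θ)
      ≤ ∫⁻ θ in Set.Ioc (γ - L) (γ + L), ENNReal.ofReal (F θ) := lintegral_mono_set hsub
    _ = ENNReal.ofReal (∫ θ in Set.Ioc (γ - L) (γ + L), F θ) := by
        rw [ofReal_integral_eq_lintegral_ofReal]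
        · exact (hcont.integrableOn_Ioc)
        · exact Filter.Eventually.of_forall hnn
    _ ≤ ENNReal.ofReal (2 * (C ^ q * κ ^ (1 - q) / (q - 1))) := by
        apply ENNReal.ofReal_le_ofReal
        rw [← intervalIntegral.integral_of_le (by linarith)]
        rw [← intervalIntegral.integral_add_adjacent_intervals
          (hcont.intervalIntegrable (γ - L) γ) (hcont.intervalIntegrable γ (γ + L))]
        have hp2 : ∫ x in γ..(γ + L), F x ≤ C ^ q * κ ^ (1 - q) / (q - 1) := by
          have he : ∫ x in γ..(γ + L), F x = ∫ x in γ..(γ + L),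
              (fun y => (C / y) ^ q) (x + (κ - γ)) := by
            apply intervalIntegral.integral_congr
            intro x hx
            rw [Set.uIcc_of_le (by linarith)] at hx
            have : |x - γ| = x - γ := _root_.abs_of_nonneg (by linarith [hx.1])
            simp only [hF, this]
            congr 2
            ring
          rw [he, intervalIntegral.integral_comp_add_right (fun y => (C / y) ^ q) (κ - γ),
            show γ + (κ - γ) = κ by ring, show γ + L + (κ - γ) = κ + L by ring]
          have := one_piece hq hκ hC hL
          rw [show 1 - q = -q + 1 by ring] at this ⊢
          exact this
        have hp1 : ∫ x in (γ - L)..γ, F x ≤ C ^ q * κ ^ (1 - q) / (q - 1) := by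
          have he : ∫ x in (γ - L)..γ, F x = ∫ x in (γ - L)..γ,
              (fun y => (C / y) ^ q) ((κ + γ) - x) := by
            apply intervalIntegral.integral_congr
            intro x hx
            rw [Set.uIcc_of_le (by linarith)] at hx
            have : |x - γ| = -(x - γ) := _root_.abs_of_nonpos (by linarith [hx.2])
            simp only [hF, this]
            congr 2
            ring
          rw [he, intervalIntegral.integral_comp_sub_left (fun y => (C / y) ^ q) (κ + γ),
            show κ + γ - γ = κ by ring, show κ + γ - (γ - L) = κ + L by ring]
          exact one_piece hq hκ hC hL
        linarith

lemma piece (p : ℝ≥0∞) (hp : 1 < p) (hptop : p ≠ ∞) {C κ : ℝ} (γ : ℝ)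
    (hC : 0 ≤ C) (hκ : 0 < κ) :
    eLpNorm (fun θ : ℝ => C / (κ + |θ - γ|)) p mT ≤
      ENNReal.ofReal ((2 * (C ^ p.toReal * κ ^ (1 - p.toReal) / (p.toReal - 1)))
        ^ p.toReal⁻¹) := by
  have hq : 1 < p.toReal := by
    have := ENNReal.toReal_strict_mono hptop hp
    simpa using this
  set q := p.toReal with hqdef
  have hq0 : (0:ℝ) ≤ q := by linarith
  have hp0 : p ≠ 0 := by
    intro h; rw [h] at hp; exact absurd hp (by simp)
  rw [eLpNorm_eq_lintegral_rpow_enorm_toReal hp0 hptop]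
  have hpt : ∀ θ : ℝ, (‖C / (κ + |θ - γ|)‖₊ : ℝ≥0∞) ^ q =
      ENNReal.ofReal ((C / (κ + |θ - γ|)) ^ q) := by
    intro θ
    have hd : 0 ≤ C / (κ + |θ - γ|) := by positivity
    rw [show ((‖C / (κ + |θ - γ|)‖₊ : ℝ≥0∞)) = ENNReal.ofReal (C / (κ + |θ - γ|)) from
        Real.enorm_eq_ofReal hd, ENNReal.ofReal_rpow_of_nonneg hd hq0]
  have hint : ∫⁻ θ, (‖C / (κ + |θ - γ|)‖₊ : ℝ≥0∞) ^ q ∂mT ≤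
      ENNReal.ofReal (2 * (C ^ q * κ ^ (1 - q) / (q - 1))) := by
    rw [mT, lintegral_smul_measure]
    calc (ENNReal.ofReal (2 * Real.pi))⁻¹ *
          ∫⁻ θ in Set.Ioc 0 (2 * Real.pi), (‖C / (κ + |θ - γ|)‖₊ : ℝ≥0∞) ^ q
        ≤ 1 * ∫⁻ θ in Set.Ioc 0 (2 * Real.pi), (‖C / (κ + |θ - γ|)‖₊ : ℝ≥0∞) ^ q := by
          apply mul_le_mul_left
          rw [ENNReal.inv_le_one]
          apply ENNReal.one_le_ofReal.mpr
          linarith [Real.pi_gt_three]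
      _ = ∫⁻ θ in Set.Ioc 0 (2 * Real.pi), ENNReal.ofReal ((C / (κ + |θ - γ|)) ^ q) := by
          rw [one_mul]; congr 1; ext θ; exact hpt θ
      _ ≤ ENNReal.ofReal (2 * (C ^ q * κ ^ (1 - q) / (q - 1))) := key_int hq hκ hC γ _ _
  calc (∫⁻ θ, (‖C / (κ + |θ - γ|)‖₊ : ℝ≥0∞) ^ q ∂mT) ^ (1 / q)
      ≤ (ENNReal.ofReal (2 * (C ^ q * κ ^ (1 - q) / (q - 1)))) ^ (1 / q) := by
        exact ENNReal.rpow_le_rpow hint (by positivity)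
    _ = ENNReal.ofReal ((2 * (C ^ q * κ ^ (1 - q) / (q - 1))) ^ q⁻¹) := by
        rw [← ENNReal.ofReal_rpow_of_nonneg _ (by positivity), one_div]
        have h1 : (0:ℝ) ≤ C ^ q := Real.rpow_nonneg hC q
        have h2 : (0:ℝ) ≤ κ ^ (1 - q) := Real.rpow_nonneg hκ.le _
        have h3 : (0:ℝ) ≤ 2 * (C ^ q * κ ^ (1 - q) / (q - 1)) := by
          apply mul_nonneg (by norm_num)
          apply div_nonneg (mul_nonneg h1 h2) (by linarith)
        exact h3

lemma realbd {q n δ : ℝ} (hq : 1 < q) (hn : 1 ≤ n) (hδ0 : 0 < δ) (hδ1 : δ ≤ 1) {κ : ℝ}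
    (hκpos : 0 < κ) (hκ : κ = 1 / n ∨ κ = δ) :
    (2 * ((144:ℝ) ^ q * κ ^ (1 - q) / (q - 1))) ^ q⁻¹ ≤
      (2 * (144:ℝ) ^ q / (q - 1)) ^ q⁻¹ * (n / δ) ^ (1 - q⁻¹) := by
  have hn0 : 0 < n := lt_of_lt_of_le one_pos hn
  have hnδ : 0 < n / δ := by positivity
  have hK : (0:ℝ) < 2 * (144:ℝ) ^ q / (q - 1) := by
    have : (0:ℝ) < (144:ℝ) ^ q := Real.rpow_pos_of_pos (by norm_num) q
    apply div_pos (by linarith) (by linarith)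
  have hκbd : κ ^ (1 - q) ≤ (n / δ) ^ (q - 1) := by
    rcases hκ with h | h
    · rw [h]
      have e : ((1:ℝ) / n) ^ (1 - q) = n ^ (q - 1) := by
        rw [Real.div_rpow zero_le_one hn0.le, Real.one_rpow, one_div,
          ← Real.rpow_neg hn0.le, show -(1 - q) = q - 1 by ring]
      rw [e]
      apply Real.rpow_le_rpow hn0.le ?_ (by linarith)
      rw [le_div_iff₀ hδ0]
      nlinarith
    · rw [h]
      have e : δ ^ (1 - q) = (1 / δ) ^ (q - 1) := by
        rw [Real.div_rpow zero_le_one hδ0.le, Real.one_rpow, one_div,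
          ← Real.rpow_neg hδ0.le, show -(q - 1) = 1 - q by ring]
      rw [e]
      apply Real.rpow_le_rpow (by positivity) ?_ (by linarith)
      exact (div_le_div_iff_of_pos_right hδ0).mpr hn
  calc (2 * ((144:ℝ) ^ q * κ ^ (1 - q) / (q - 1))) ^ q⁻¹
      = ((2 * (144:ℝ) ^ q / (q - 1)) * κ ^ (1 - q)) ^ q⁻¹ := by ring_nf
    _ ≤ ((2 * (144:ℝ) ^ q / (q - 1)) * (n / δ) ^ (q - 1)) ^ q⁻¹ := by
        apply Real.rpow_le_rpow (by positivity) ?_ (by positivity)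
        exact mul_le_mul_of_nonneg_left hκbd hK.le
    _ = (2 * (144:ℝ) ^ q / (q - 1)) ^ q⁻¹ * ((n / δ) ^ (q - 1)) ^ q⁻¹ :=
        Real.mul_rpow hK.le (Real.rpow_nonneg hnδ.le _)
    _ = (2 * (144:ℝ) ^ q / (q - 1)) ^ q⁻¹ * (n / δ) ^ (1 - q⁻¹) := by
        rw [← Real.rpow_mul hnδ.le]
        congr 1
        field_simp

lemma contdiv {C κ : ℝ} (hκ : 0 < κ) (γ : ℝ) :
    Continuous (fun θ : ℝ => C / (κ + |θ - γ|)) := by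
  apply continuous_const.div
  · continuity
  · intro x
    have : 0 ≤ |x - γ| := abs_nonneg _
    positivity

/-- Lemma 5.1, estimate \eqref{Lp_norm_upper_estim_test_func_1}.
For `1 < p ≤ ∞` there is `c(p) > 0` such that for every `n ≥ 2` and `r ∈ (0,1)`, the
test function `f(z) = b'_{−r}(z) Σ_{k=0}^{n−2} b_{−r}(z)^k` satisfies
`‖f‖_{L^p} ≤ c(p) (n/(1−r))^{1−1/p}`. -/
theorem stmt_18 (p : ℝ≥0∞) (hp : 1 < p) :
    ∃ c : ℝ, 0 < c ∧ ∀ n : ℕ, 2 ≤ n → ∀ r : ℝ, 0 < r → r < 1 →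
      circLp (fun z => deriv (bm r) z * ∑ k ∈ Finset.range (n - 1), bm r z ^ k) p ≤
        ENNReal.ofReal (c * ((n : ℝ) / (1 - r)) ^ (1 - p.toReal⁻¹)) := by
  by_cases hptop : p = ∞
  · refine ⟨288, by norm_num, ?_⟩
    intro n hn r hr0 hr1
    have hn2 : (2:ℝ) ≤ (n:ℝ) := by exact_mod_cast hn
    have hδ : (0:ℝ) < 1 - r := by linarith
    have hbound : ∀ᵐ θ ∂mT,
        ‖deriv (bm r) (eθ θ) * ∑ k ∈ Finset.range (n - 1), bm r (eθ θ) ^ k‖ ≤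
          288 * ((n : ℝ) / (1 - r)) := by
      rw [mT]
      apply Measure.ae_smul_measure
      filter_upwards [ae_restrict_mem measurableSet_Ioc] with θ hθ
      have h := ptwise n hn r hr0 hr1 θ hθ
      have hm0 : (0:ℝ) ≤ min θ (2 * Real.pi - θ) := le_min hθ.1.le (by linarith [hθ.2])
      have hnpos : (0:ℝ) < (n:ℝ) := by linarith
      have hεn : (0:ℝ) < 1 / (n:ℝ) := by positivity
      have h1 : 144 / (min θ (2 * Real.pi - θ) + 1 / n) ≤ 144 * n := by
        rw [div_le_iff₀ (by linarith)]
        have he : (n:ℝ) * (1 / n) = 1 := by field_simp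
        nlinarith [mul_nonneg hnpos.le hm0]
      have h2 : 144 / ((1 - r) + |θ - Real.pi|) ≤ 144 / (1 - r) := by
        rw [div_le_div_iff₀ (by linarith [abs_nonneg (θ - Real.pi)]) hδ]
        nlinarith [abs_nonneg (θ - Real.pi)]
      have h3 : 144 * (n:ℝ) ≤ 144 * n / (1 - r) := by
        rw [le_div_iff₀ hδ]
        nlinarith
      have h4 : 144 / (1 - r) ≤ 144 * n / (1 - r) := by
        rw [div_le_div_iff₀ hδ hδ]
        nlinarith
      calc ‖deriv (bm r) (eθ θ) * ∑ k ∈ Finset.range (n - 1), bm r (eθ θ) ^ k‖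
          ≤ 144 / (min θ (2 * Real.pi - θ) + 1 / n) + 144 / ((1 - r) + |θ - Real.pi|) := h
        _ ≤ 144 * n / (1 - r) + 144 * n / (1 - r) := by linarith
        _ = 288 * ((n : ℝ) / (1 - r)) := by ring
    have hle := eLpNorm_le_of_ae_bound (p := p) hbound
    rw [circLp]
    refine hle.trans ?_
    subst hptop
    simp only [ENNReal.toReal_top, inv_zero, ENNReal.rpow_zero, one_mul, sub_zero,
      Real.rpow_one]
    exact le_rfl
  · have hq : 1 < p.toReal := by simpa using ENNReal.toReal_strict_mono hptop hp
    set q := p.toReal with hqdef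
    have hKpos : (0:ℝ) < 2 * (144:ℝ) ^ q / (q - 1) := by
      have : (0:ℝ) < (144:ℝ) ^ q := Real.rpow_pos_of_pos (by norm_num) q
      apply div_pos (by linarith) (by linarith)
    have hcpos : (0:ℝ) < 3 * (2 * (144:ℝ) ^ q / (q - 1)) ^ q⁻¹ := by
      have := Real.rpow_pos_of_pos hKpos q⁻¹
      linarith
    refine ⟨3 * (2 * (144:ℝ) ^ q / (q - 1)) ^ q⁻¹, hcpos, ?_⟩
    intro n hn r hr0 hr1
    have hn2 : (2:ℝ) ≤ (n:ℝ) := by exact_mod_cast hn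
    have hnpos : (0:ℝ) < (n:ℝ) := by linarith
    have hδ : (0:ℝ) < 1 - r := by linarith
    have hεn : (0:ℝ) < 1 / (n:ℝ) := by positivity
    set g₁ : ℝ → ℝ := fun θ => 144 / (1 / (n:ℝ) + |θ - 0|) with hg₁
    set g₂ : ℝ → ℝ := fun θ => 144 / (1 / (n:ℝ) + |θ - 2 * Real.pi|) with hg₂
    set g₃ : ℝ → ℝ := fun θ => 144 / ((1 - r) + |θ - Real.pi|) with hg₃
    have hm₁ : AEStronglyMeasurable g₁ mT := (contdiv hεn 0).aestronglyMeasurable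
    have hm₂ : AEStronglyMeasurable g₂ mT := (contdiv hεn (2 * Real.pi)).aestronglyMeasurable
    have hm₃ : AEStronglyMeasurable g₃ mT := (contdiv hδ Real.pi).aestronglyMeasurable
    have hmono : ∀ᵐ θ ∂mT,
        ‖deriv (bm r) (eθ θ) * ∑ k ∈ Finset.range (n - 1), bm r (eθ θ) ^ k‖ ≤
          ‖(g₁ + g₂ + g₃) θ‖ := by
      rw [mT]
      apply Measure.ae_smul_measure
      filter_upwards [ae_restrict_mem measurableSet_Ioc] with θ hθ
      have h := ptwise n hn r hr0 hr1 θ hθ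
      have hg₁0 : 0 ≤ g₁ θ := by rw [hg₁]; positivity
      have hg₂0 : 0 ≤ g₂ θ := by rw [hg₂]; positivity
      have hg₃0 : 0 ≤ g₃ θ := by rw [hg₃]; positivity
      have hsplit : 144 / (min θ (2 * Real.pi - θ) + 1 / n) ≤ g₁ θ + g₂ θ := by
        rcases min_cases θ (2 * Real.pi - θ) with ⟨he, _⟩ | ⟨he, _⟩
        · have heq : g₁ θ = 144 / (min θ (2 * Real.pi - θ) + 1 / n) := by
            simp only [hg₁]
            rw [he, sub_zero, _root_.abs_of_nonneg hθ.1.le, add_comm]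
          linarith
        · have heq : g₂ θ = 144 / (min θ (2 * Real.pi - θ) + 1 / n) := by
            simp only [hg₂]
            rw [he, _root_.abs_of_nonpos (by linarith [hθ.2] : θ - 2 * Real.pi ≤ 0)]
            ring_nf
          linarith
      have hG : g₃ θ = 144 / ((1 - r) + |θ - Real.pi|) := by rw [hg₃]
      have hsum : ‖deriv (bm r) (eθ θ) * ∑ k ∈ Finset.range (n - 1), bm r (eθ θ) ^ k‖ ≤
          (g₁ + g₂ + g₃) θ := by
        simp only [Pi.add_apply]
        linarith
      exact hsum.trans (le_abs_self _)
    have hstep := eLpNorm_mono_ae (p := p) hmono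
    have htri : eLpNorm (g₁ + g₂ + g₃) p mT ≤
        eLpNorm g₁ p mT + eLpNorm g₂ p mT + eLpNorm g₃ p mT := by
      calc eLpNorm (g₁ + g₂ + g₃) p mT
          ≤ eLpNorm (g₁ + g₂) p mT + eLpNorm g₃ p mT :=
            eLpNorm_add_le (hm₁.add hm₂) hm₃ hp.le
        _ ≤ eLpNorm g₁ p mT + eLpNorm g₂ p mT + eLpNorm g₃ p mT := by
            gcongr
            exact eLpNorm_add_le hm₁ hm₂ hp.le
    have hb₁ := piece p hp hptop (C := 144) (κ := 1 / (n:ℝ)) 0 (by norm_num) hεn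
    have hb₂ := piece p hp hptop (C := 144) (κ := 1 / (n:ℝ)) (2 * Real.pi) (by norm_num) hεn
    have hb₃ := piece p hp hptop (C := 144) (κ := 1 - r) Real.pi (by norm_num) hδ
    have hr₁ := realbd hq (by linarith : (1:ℝ) ≤ (n:ℝ)) hδ (by linarith) hεn
      (Or.inl rfl)
    have hr₃ := realbd hq (by linarith : (1:ℝ) ≤ (n:ℝ)) hδ (by linarith) hδ
      (Or.inr rfl)
    have hB0 : ∀ κ : ℝ, 0 < κ → (0:ℝ) ≤ (2 * ((144:ℝ) ^ q * κ ^ (1 - q) / (q - 1))) ^ q⁻¹ := by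
      intro κ hκ
      apply Real.rpow_nonneg
      have h1 : (0:ℝ) ≤ (144:ℝ) ^ q := Real.rpow_nonneg (by norm_num) q
      have h2 : (0:ℝ) ≤ κ ^ (1 - q) := Real.rpow_nonneg hκ.le _
      have h3 : (0:ℝ) < q - 1 := by linarith
      positivity
    calc circLp (fun z => deriv (bm r) z * ∑ k ∈ Finset.range (n - 1), bm r z ^ k) p
        = eLpNorm (fun θ : ℝ => deriv (bm r) (eθ θ) *
            ∑ k ∈ Finset.range (n - 1), bm r (eθ θ) ^ k) p mT := rfl
      _ ≤ eLpNorm (g₁ + g₂ + g₃) p mT := hstep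
      _ ≤ eLpNorm g₁ p mT + eLpNorm g₂ p mT + eLpNorm g₃ p mT := htri
      _ ≤ ENNReal.ofReal ((2 * ((144:ℝ) ^ q * (1 / (n:ℝ)) ^ (1 - q) / (q - 1))) ^ q⁻¹) +
          ENNReal.ofReal ((2 * ((144:ℝ) ^ q * (1 / (n:ℝ)) ^ (1 - q) / (q - 1))) ^ q⁻¹) +
          ENNReal.ofReal ((2 * ((144:ℝ) ^ q * (1 - r) ^ (1 - q) / (q - 1))) ^ q⁻¹) := by
          exact add_le_add (add_le_add hb₁ hb₂) hb₃
      _ = ENNReal.ofReal ((2 * ((144:ℝ) ^ q * (1 / (n:ℝ)) ^ (1 - q) / (q - 1))) ^ q⁻¹ +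
          (2 * ((144:ℝ) ^ q * (1 / (n:ℝ)) ^ (1 - q) / (q - 1))) ^ q⁻¹ +
          (2 * ((144:ℝ) ^ q * (1 - r) ^ (1 - q) / (q - 1))) ^ q⁻¹) := by
          rw [ENNReal.ofReal_add (add_nonneg (hB0 _ hεn) (hB0 _ hεn)) (hB0 _ hδ),
            ENNReal.ofReal_add (hB0 _ hεn) (hB0 _ hεn)]
      _ ≤ ENNReal.ofReal (3 * (2 * (144:ℝ) ^ q / (q - 1)) ^ q⁻¹ *
            ((n : ℝ) / (1 - r)) ^ (1 - q⁻¹)) := by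
          apply ENNReal.ofReal_le_ofReal
          nlinarith [hr₁, hr₃]
end
end
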